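/- arXiv:1912.07147 — 3 statements merged into one kernel-verified Lean document; each statement's English description precedes it below -/
import Mathlib

section
/- Let n ≥ 6 and n/2 + 2 ≤ r ≤ n − 1, and let G be the graph on n vertices obtained from the complete graph K_{n−r+3} by deleting one edge v₀v_{r−2} and then attaching an (r−2)-ear at v₀ and v_{r−2}. Then G is 2-connected, |E(G)| = C(n−r+3, 2) + r − 3, and rc₂(G) ≥ r. Consequently s₂(n,r) ≥ C(n−r+3, 2) + r − 3. -/
open SimpleGraph

/-- A walk is rainbow (w.r.t. an edge-colouring `col`) if its edges receive
pairwise distinct colours. -/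
def IsRainbowWalk {V α : Type*} {G : SimpleGraph V} {u v : V} (col : Sym2 V → α)
    (p : G.Walk u v) : Prop :=
  (p.edges.map col).Nodup

/-- An edge-colouring is rainbow 2-connected if every two distinct vertices are
connected by two internally vertex-disjoint rainbow paths. -/
def RainbowTwoConnectedColouring {V α : Type*} (G : SimpleGraph V) (col : Sym2 V → α) : Prop :=
  ∀ u v : V, u ≠ v → ∃ p q : G.Walk u v, p.IsPath ∧ q.IsPath ∧ p ≠ q ∧
    IsRainbowWalk col p ∧ IsRainbowWalk col q ∧
    ∀ w : V, w ∈ p.support → w ∈ q.support → w = u ∨ w = v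

/-- The rainbow 2-connection number: the least number of colours in a rainbow
2-connected colouring. -/
noncomputable def rc2 {V : Type*} (G : SimpleGraph V) : ℕ :=
  sInf {r : ℕ | ∃ col : Sym2 V → Fin r, RainbowTwoConnectedColouring G col}

/-- A graph is 2-connected if it has at least 3 vertices and deleting any single
vertex leaves a connected graph. -/
def TwoConnected {V : Type*} [Fintype V] (G : SimpleGraph V) : Prop :=
  3 ≤ Fintype.card V ∧ ∀ v : V, (G.induce ({v}ᶜ : Set V)).Connected

/-- `t2 n r`: minimum number of edges of a 2-connected graph on `n` vertices
with rainbow 2-connection number at most `r`. -/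
noncomputable def t2 (n r : ℕ) : ℕ :=
  sInf {m : ℕ | ∃ G : SimpleGraph (Fin n), TwoConnected G ∧ rc2 G ≤ r ∧ G.edgeSet.ncard = m}

/-- `s2 n r`: maximum number of edges of a 2-connected graph on `n` vertices
with rainbow 2-connection number at least `r`. -/
noncomputable def s2 (n r : ℕ) : ℕ :=
  sSup {m : ℕ | ∃ G : SimpleGraph (Fin n), TwoConnected G ∧ r ≤ rc2 G ∧ G.edgeSet.ncard = m}

/-!
`G` has a Hamiltonian cycle (the ear followed by the other vertices of `K`), so any two vertices
are joined by two internally disjoint paths, the two arcs of that cycle; this gives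
2-connectivity, and a rainbow 2-connected colouring exists (any injective one).

For the lower bound let `L = r - 2` and suppose a rainbow 2-connected colouring uses at most
`L + 1` colours. For each ear edge `v i v (i+1)` one of the two rainbow paths joining its ends
avoids that edge; call it the detour of `v i v (i+1)`. Cutting it along segments of the ear shows
that it uses the other `L - 1` ear edges, an edge `v 0 w` and an edge `w' v L` with `w, w'` apexes,
i.e. vertices of `K \ {v 0, v L}`. Being rainbow it has at most `L + 1` edges, so these are all
its edges, `w = w'`, and every colour occurs on it. Ear colours are pairwise distinct (any two ear
edges lie on the detour of a third), so the colour of `v i v (i+1)` sits on `v 0 w` or `w v L`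
while no other ear colour does; hence `i ↦ w` is injective and `L ≤ |K| - 2`, i.e. `2r ≤ n + 3`.
-/

theorem Function.Periodic.eq_or_eq_add_of_apply_eq {α : Type*} {c : ℕ → α} {N : ℕ}
    (hper : Function.Periodic c N) (hN : 0 < N) (hinj : Set.InjOn c (Set.Iio N)) {a b : ℕ}
    (hab : a ≤ b) (hba : b ≤ a + N) (h : c a = c b) : b = a ∨ b = a + N := by
  rw [← hper.map_mod_nat a, ← hper.map_mod_nat b] at h
  have hmod := hinj (Nat.mod_lt a hN) (Nat.mod_lt b hN) h
  obtain ⟨q, hq⟩ := Nat.dvd_of_mod_eq_zero (Nat.sub_mod_eq_zero_of_mod_eq hmod.symm)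
  have : q ≤ 1 := Nat.le_of_mul_le_mul_left (show N * q ≤ N * 1 by omega) hN
  interval_cases q <;> omega

theorem Sym2.mk_mem_image_offDiag_iff {α : Type*} [DecidableEq α] {s : Finset α} {a b : α} :
    s(a, b) ∈ s.offDiag.image Sym2.mk.uncurry ↔ a ∈ s ∧ b ∈ s ∧ a ≠ b := by
  simp only [Finset.mem_image, Finset.mem_offDiag, Prod.exists, Function.uncurry_apply_pair,
    Sym2.eq_iff]
  constructor
  · rintro ⟨x, y, ⟨hx, hy, hxy⟩, ⟨rfl, rfl⟩ | ⟨rfl, rfl⟩⟩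
    exacts [⟨hx, hy, hxy⟩, ⟨hy, hx, Ne.symm hxy⟩]
  · rintro ⟨ha, hb, hab⟩
    exact ⟨a, b, ⟨ha, hb, hab⟩, .inl ⟨rfl, rfl⟩⟩

namespace SimpleGraph

variable {V : Type*} {G : SimpleGraph V}

theorem Walk.exists_mem_edges_of_mem_of_notMem {u w : V} (p : G.Walk u w) {S : Set V}
    (hu : u ∈ S) (hw : w ∉ S) : ∃ a ∈ S, ∃ b ∉ S, s(a, b) ∈ p.edges := by
  obtain ⟨d, hd, ha, hb⟩ := p.exists_boundary_dart S hu hw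
  exact ⟨d.fst, ha, d.snd, hb, List.mem_map_of_mem hd⟩

theorem Walk.IsPath.eq_cons_nil_of_mem_edges {u w : V} {p : G.Walk u w} (hp : p.IsPath)
    (h : s(u, w) ∈ p.edges) : p = .cons (p.adj_of_mem_edges h) .nil := by
  cases p with
  | nil => simp at h
  | @cons _ b _ hub p =>
    rw [Walk.cons_isPath_iff] at hp
    rw [Walk.edges_cons, List.mem_cons] at h
    rcases h with h | h
    · obtain rfl : b = w := by
        rcases Sym2.eq_iff.mp h with ⟨-, h⟩ | ⟨rfl, -⟩
        exacts [h.symm, absurd rfl hub.ne]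
      obtain rfl : p = .nil := (Walk.isPath_iff_nil.mp hp.1).eq_nil
      rfl
    · exact absurd (p.fst_mem_support_of_mem_edges h) hp.2

theorem exists_walk_support_eq_map_range' {f : ℕ → V} (hf : ∀ m, G.Adj (f m) (f (m + 1)))
    (k d : ℕ) : ∃ p : G.Walk (f k) (f (k + d)), p.support = (List.range' k (d + 1)).map f := by
  induction d with
  | zero => exact ⟨.nil, by simp⟩
  | succ d ih =>
    obtain ⟨p, hp⟩ := ih
    refine ⟨p.concat (hf (k + d)), ?_⟩
    rw [Walk.support_concat, hp, List.range'_concat (n := d + 1), List.map_append]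
    simp

theorem Walk.IsPath.length_le_one {u w : V} {p : G.Walk u w} (hp : p.IsPath)
    (h : ∀ x ∈ p.support, x = u ∨ x = w) : p.length ≤ 1 := by
  classical
  have hsub : p.support.toFinset ⊆ {u, w} := fun x hx => by
    simpa using h x (List.mem_toFinset.mp hx)
  have := (Finset.card_le_card hsub).trans Finset.card_le_two
  rw [List.toFinset_card_of_nodup hp.support_nodup, Walk.length_support] at this
  omega

def HasTwoInternallyDisjointPaths (G : SimpleGraph V) (u w : V) : Prop :=
  ∃ p q : G.Walk u w, p.IsPath ∧ q.IsPath ∧ p ≠ q ∧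
    ∀ x : V, x ∈ p.support → x ∈ q.support → x = u ∨ x = w

theorem HasTwoInternallyDisjointPaths.symm {u w : V} (h : G.HasTwoInternallyDisjointPaths u w) :
    G.HasTwoInternallyDisjointPaths w u := by
  obtain ⟨p, q, hp, hq, hpq, hd⟩ := h
  refine ⟨p.reverse, q.reverse, hp.reverse, hq.reverse,
    fun h => hpq (Walk.reverse_injective h), fun x hxp hxq => ?_⟩
  rw [Walk.support_reverse, List.mem_reverse] at hxp hxq
  exact (hd x hxp hxq).symm

theorem exists_path_of_adj_succ {f : ℕ → V} (hf : ∀ m, G.Adj (f m) (f (m + 1))) {k d : ℕ}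
    (hinj : Set.InjOn f (Set.Icc k (k + d))) :
    ∃ p : G.Walk (f k) (f (k + d)), p.IsPath ∧ p.length = d ∧
      ∀ x, x ∈ p.support ↔ x ∈ f '' Set.Icc k (k + d) := by
  obtain ⟨p, hp⟩ := exists_walk_support_eq_map_range' hf k d
  have hmem : ∀ a, a ∈ List.range' k (d + 1) ↔ a ∈ Set.Icc k (k + d) := fun a => by
    rw [List.mem_range'_1, Set.mem_Icc]; omega
  refine ⟨p, ?_, ?_, fun x => ?_⟩
  · rw [Walk.isPath_def, hp]
    exact (List.nodup_range' ..).map_on fun a ha b hb => hinj ((hmem a).mp ha) ((hmem b).mp hb)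
  · simpa [Walk.length_support] using congrArg List.length hp
  · simp only [hp, List.mem_map, hmem, Set.mem_image]

/-- The two arcs `c i, …, c j` and `c j, …, c (i + N) = c i`. -/
theorem hasTwoInternallyDisjointPaths_of_periodic {c : ℕ → V} {N : ℕ} (hN : 3 ≤ N)
    (hadj : ∀ m, G.Adj (c m) (c (m + 1))) (hper : Function.Periodic c N)
    (hinj : Set.InjOn c (Set.Iio N)) {i j : ℕ} (hij : i < j) (hj : j < N) :
    G.HasTwoInternallyDisjointPaths (c i) (c j) := by
  have eq_of_apply_eq : ∀ {a b}, a ≤ b → b ≤ a + N → c a = c b → b = a ∨ b = a + N :=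
    hper.eq_or_eq_add_of_apply_eq (by omega) hinj
  have injOn_Icc : ∀ k d, d < N → Set.InjOn c (Set.Icc k (k + d)) := by
    intro k d hd a ha b hb h
    rw [Set.mem_Icc] at ha hb
    rcases le_total a b with hab | hab
    · have := eq_of_apply_eq hab (by omega) h; omega
    · have := eq_of_apply_eq hab (by omega) h.symm; omega
  obtain ⟨p, hp, hp_len, hp_supp⟩ :=
    exists_path_of_adj_succ hadj (injOn_Icc i (j - i) (by omega))
  obtain ⟨q, hq, hq_len, hq_supp⟩ :=
    exists_path_of_adj_succ hadj (injOn_Icc j (i + N - j) (by omega))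
  let p' := p.copy rfl (congrArg c (show i + (j - i) = j by omega))
  let q' :=
    (q.copy rfl ((congrArg c (show j + (i + N - j) = i + N by omega)).trans (hper i))).reverse
  have hdisj : ∀ x, x ∈ p'.support → x ∈ q'.support → x = c i ∨ x = c j := by
    intro x hxp hxq
    simp only [p', q', Walk.support_copy, Walk.support_reverse, List.mem_reverse] at hxp hxq
    obtain ⟨a, ha, rfl⟩ := (hp_supp _).mp hxp
    obtain ⟨b, hb, hab⟩ := (hq_supp _).mp hxq
    rw [Set.mem_Icc] at ha hb
    rcases eq_of_apply_eq (by omega) (by omega) hab.symm with h | h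
    · right; congr 1; omega
    · left; congr 1; omega
  have hp' : p'.IsPath := by simpa [p'] using hp
  have hq' : q'.IsPath := by simpa [q'] using hq
  refine ⟨p', q', hp', hq', fun h => ?_, hdisj⟩
  have h1 := hp'.length_le_one fun x hx => hdisj x hx (h ▸ hx)
  have h2 := hq'.length_le_one fun x hx => hdisj x (h ▸ hx) hx
  simp only [p', q', Walk.length_reverse, Walk.length_copy] at h1 h2
  omega

theorem hasTwoInternallyDisjointPaths_of_cycle {s : ℕ → V} {N : ℕ} (hN : 3 ≤ N)
    (hadj : ∀ m, m + 1 < N → G.Adj (s m) (s (m + 1))) (hclose : G.Adj (s (N - 1)) (s 0))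
    (hinj : Set.InjOn s (Set.Iio N)) {i j : ℕ} (hi : i < N) (hj : j < N) (hij : i ≠ j) :
    G.HasTwoInternallyDisjointPaths (s i) (s j) := by
  let c : ℕ → V := fun m => s (m % N)
  have hc : ∀ m, m < N → c m = s m := fun m hm => congrArg s (Nat.mod_eq_of_lt hm)
  have hcadj : ∀ m, G.Adj (c m) (c (m + 1)) := by
    intro m
    have hm : m % N < N := Nat.mod_lt m (by omega)
    simp only [c, ← Nat.mod_add_mod m N 1]
    rcases Nat.lt_or_ge (m % N + 1) N with h | h
    · rw [Nat.mod_eq_of_lt h]; exact hadj _ h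
    · rw [show m % N + 1 = N by omega, Nat.mod_self, show m % N = N - 1 by omega]; exact hclose
  have hcper : Function.Periodic c N := fun m => by simp [c]
  have hcinj : Set.InjOn c (Set.Iio N) := fun a ha b hb h => hinj ha hb (by
    rwa [hc a ha, hc b hb] at h)
  rw [← hc i hi, ← hc j hj]
  rcases Nat.lt_or_gt_of_ne hij with h | h
  · exact hasTwoInternallyDisjointPaths_of_periodic hN hcadj hcper hcinj h hj
  · exact (hasTwoInternallyDisjointPaths_of_periodic hN hcadj hcper hcinj h hi).symm

theorem twoConnected_of_hasTwoInternallyDisjointPaths [Fintype V] (hV : 3 ≤ Fintype.card V)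
    (h : ∀ u w, u ≠ w → G.HasTwoInternallyDisjointPaths u w) : TwoConnected G := by
  refine ⟨hV, fun x => (connected_iff _).mpr ⟨?_, ?_⟩⟩
  · rintro ⟨a, ha⟩ ⟨b, hb⟩
    rcases eq_or_ne a b with rfl | hab
    · rfl
    obtain ⟨p, q, -, -, -, hd⟩ := h a b hab
    have avoid : ∀ {r : G.Walk a b}, x ∉ r.support →
        ∀ y ∈ r.support, y ∈ ({x}ᶜ : Set V) :=
      fun hr y hy hyx => hr (hyx ▸ hy)
    by_cases hxp : x ∈ p.support
    · have hxq : x ∉ q.support := fun hxq => by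
        rcases hd x hxp hxq with rfl | rfl
        exacts [ha rfl, hb rfl]
      exact (q.induce _ (avoid hxq)).reachable
    · exact (p.induce _ (avoid hxp)).reachable
  · obtain ⟨y, hy⟩ := Fintype.exists_ne_of_one_lt_card (by omega) x
    exact ⟨⟨y, hy⟩⟩

theorem exists_rainbowTwoConnectedColouring [Fintype V]
    (h : ∀ u w, u ≠ w → G.HasTwoInternallyDisjointPaths u w) :
    ∃ R, ∃ col : Sym2 V → Fin R, RainbowTwoConnectedColouring G col := by
  classical
  let col := Fintype.equivFin (Sym2 V)
  refine ⟨_, col, fun u w huw => ?_⟩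
  obtain ⟨p, q, hp, hq, hpq, hd⟩ := h u w huw
  exact ⟨p, q, hp, hq, hpq, hp.edges_nodup.map col.injective,
    hq.edges_nodup.map col.injective, hd⟩

theorem le_rc2_of_forall {r : ℕ}
    (hex : ∃ R, ∃ col : Sym2 V → Fin R, RainbowTwoConnectedColouring G col)
    (h : ∀ R (col : Sym2 V → Fin R), RainbowTwoConnectedColouring G col → r ≤ R) :
    r ≤ rc2 G :=
  le_csInf hex fun R ⟨col, hcol⟩ => h R col hcol

end SimpleGraph

section Rainbow

variable {V : Type*} {G : SimpleGraph V} {R : ℕ} {col : Sym2 V → Fin R}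

theorem IsRainbowWalk.length_le {u w : V} {p : G.Walk u w} (hp : IsRainbowWalk col p) :
    p.length ≤ R := by
  simpa [Walk.length_edges] using hp.length_le_card

theorem IsRainbowWalk.apply_ne {u w : V} {p : G.Walk u w} (hp : IsRainbowWalk col p)
    {e f : Sym2 V} (he : e ∈ p.edges) (hf : f ∈ p.edges) (hef : e ≠ f) : col e ≠ col f :=
  fun h => hef (List.inj_on_of_nodup_map hp he hf h)

theorem RainbowTwoConnectedColouring.exists_path_notMem_edges
    (hcol : RainbowTwoConnectedColouring G col) {u w : V} (huw : u ≠ w) :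
    ∃ P : G.Walk u w, P.IsPath ∧ IsRainbowWalk col P ∧ s(u, w) ∉ P.edges := by
  obtain ⟨p, q, hp, hq, hpq, hpr, hqr, -⟩ := hcol u w huw
  by_cases h : s(u, w) ∈ p.edges
  · refine ⟨q, hq, hqr, fun h' => hpq ?_⟩
    rw [hp.eq_cons_nil_of_mem_edges h, hq.eq_cons_nil_of_mem_edges h']
  · exact ⟨p, hp, hpr, h⟩

end Rainbow


/-- `G` is the complete graph on `K` with the edge `v 0 v L` deleted and the ear
`v 0 v 1 ⋯ v L` attached. -/
structure IsEarGraph {V : Type*} (G : SimpleGraph V) (K : Set V) (v : ℕ → V) (L : ℕ) :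
    Prop where
  inj : ∀ i j, i ≤ L → j ≤ L → v i = v j → i = j
  zero_mem : v 0 ∈ K
  last_mem : v L ∈ K
  notMem : ∀ i, 0 < i → i < L → v i ∉ K
  adj_iff : ∀ a b : V, G.Adj a b ↔
    ((a ∈ K ∧ b ∈ K ∧ a ≠ b ∧ ({a, b} : Set V) ≠ {v 0, v L}) ∨
      ∃ i, i + 1 ≤ L ∧ ({a, b} : Set V) = {v i, v (i + 1)})

namespace IsEarGraph

variable {V : Type*} {G : SimpleGraph V} {K : Set V} {v : ℕ → V} {L : ℕ}
  (hG : IsEarGraph G K v L)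
include hG

theorem ne {i j : ℕ} (hi : i ≤ L) (hj : j ≤ L) (hij : i ≠ j) : v i ≠ v j :=
  fun h => hij (hG.inj i j hi hj h)

theorem adj_succ {i : ℕ} (hi : i < L) : G.Adj (v i) (v (i + 1)) :=
  (hG.adj_iff _ _).mpr (.inr ⟨i, hi, rfl⟩)

theorem adj_of_mem_apex {a b : V} (ha : a ∈ K) (hb : b ∈ K \ {v 0, v L}) (hab : a ≠ b) :
    G.Adj a b := by
  simp only [Set.mem_sdiff, Set.mem_insert_iff, Set.mem_singleton_iff, not_or] at hb
  refine (hG.adj_iff a b).mpr (.inl ⟨ha, hb.1, hab, fun h => ?_⟩)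
  rcases Set.pair_eq_pair_iff.mp h with ⟨-, h⟩ | ⟨-, h⟩
  exacts [hb.2.2 h, hb.2.1 h]

theorem apex_ne {w : V} (hw : w ∈ K \ {v 0, v L}) {m : ℕ} (hm : m ≤ L) : v m ≠ w := by
  rintro rfl
  simp only [Set.mem_sdiff, Set.mem_insert_iff, Set.mem_singleton_iff, not_or] at hw
  rcases Nat.eq_zero_or_pos m with rfl | hm0
  · exact hw.2.1 rfl
  rcases Nat.lt_or_ge m L with hmL | hmL
  · exact hG.notMem m hm0 hmL hw.1
  · exact hw.2.2 (by rw [show m = L by omega])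

theorem eq_of_adj {j : ℕ} (hj : j ≤ L) {b : V} (h : G.Adj (v j) b) :
    (0 < j ∧ b = v (j - 1)) ∨ (j < L ∧ b = v (j + 1)) ∨
      ((j = 0 ∨ j = L) ∧ b ∈ K \ {v 0, v L}) := by
  rcases (hG.adj_iff _ _).mp h with ⟨hjK, hbK, hjb, hpair⟩ | ⟨i, hi, hpair⟩
  · have hj' : j = 0 ∨ j = L := by
      by_contra! h'
      exact hG.notMem j (by omega) (by omega) hjK
    refine .inr (.inr ⟨hj', hbK, ?_⟩)
    simp only [Set.mem_insert_iff, Set.mem_singleton_iff, not_or]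
    rcases hj' with rfl | rfl
    · exact ⟨hjb.symm, fun h => hpair (by rw [h])⟩
    · exact ⟨fun h => hpair (by rw [h, Set.pair_comm]), hjb.symm⟩
  · rcases Set.pair_eq_pair_iff.mp hpair with ⟨h1, h2⟩ | ⟨h1, h2⟩
    · obtain rfl := hG.inj _ _ hj (by omega) h1
      exact .inr (.inl ⟨by omega, h2⟩)
    · obtain rfl := hG.inj _ _ hj (by omega) h1
      exact .inl ⟨by omega, h2⟩

theorem ear_edge_inj {i j : ℕ} (hi : i < L) (hj : j < L)
    (h : s(v i, v (i + 1)) = s(v j, v (j + 1))) : i = j := by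
  rcases Sym2.eq_iff.mp h with ⟨h1, -⟩ | ⟨h1, h2⟩
  · exact hG.inj i j (by omega) (by omega) h1
  · have := hG.inj _ _ (by omega) (by omega) h1
    have := hG.inj _ _ (by omega) (by omega) h2
    omega

theorem apex_notMem_ear_edge {w : V} (hw : w ∈ K \ {v 0, v L}) {j : ℕ} (hj : j < L) :
    w ∉ s(v j, v (j + 1)) := by
  rw [Sym2.mem_iff]
  rintro (h | h)
  exacts [hG.apex_ne hw (by omega) h.symm, hG.apex_ne hw hj h.symm]

theorem ncard_apex_add_two [Finite V] (hL : 1 ≤ L) : (K \ {v 0, v L}).ncard + 2 = K.ncard := by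
  have hsub : {v 0, v L} ⊆ K :=
    Set.insert_subset hG.zero_mem (Set.singleton_subset_iff.mpr hG.last_mem)
  have hpair : ({v 0, v L} : Set V).ncard = 2 :=
    Set.ncard_pair (hG.ne (Nat.zero_le L) le_rfl (by omega))
  have hle := Set.ncard_le_ncard hsub
  rw [Set.ncard_sdiff hsub, hpair]
  omega

/-- The ear followed by the apexes in any order. -/
theorem exists_cycle [Finite V] (hL : 1 ≤ L) (hK : 3 ≤ K.ncard) :
    ∃ s : ℕ → V, Set.InjOn s (Set.Iio (L + 1 + (K \ {v 0, v L}).ncard)) ∧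
      (∀ m, m + 1 < L + 1 + (K \ {v 0, v L}).ncard → G.Adj (s m) (s (m + 1))) ∧
      G.Adj (s (L + (K \ {v 0, v L}).ncard)) (s 0) := by
  have hA := hG.ncard_apex_add_two hL
  set A := K \ {v 0, v L}
  have : Nonempty V := ⟨v 0⟩
  obtain ⟨k, hkA, hkinj⟩ := (Set.finite_Iio A.ncard).exists_injOn_of_encard_le (t := A) (by
    rw [← Finset.coe_range, Set.encard_coe_eq_coe_finsetCard, Finset.card_range,
      Set.Finite.cast_ncard_eq A.toFinite])
  have hk : ∀ m, m < A.ncard → k m ∈ A := fun m hm => hkA hm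
  refine ⟨fun m => if m ≤ L then v m else k (m - (L + 1)), ?_, ?_, ?_⟩
  · intro i hi j hj h
    simp only [Set.mem_Iio] at hi hj
    dsimp only at h
    split_ifs at h with h1 h2 h2
    · exact hG.inj i j h1 h2 h
    · exact absurd h (hG.apex_ne (hk _ (by omega)) h1)
    · exact absurd h.symm (hG.apex_ne (hk _ (by omega)) h2)
    · have := hkinj (show i - (L + 1) < A.ncard by omega) (show j - (L + 1) < A.ncard by omega) h
      omega
  · intro m hm
    rcases Nat.lt_trichotomy m L with h | rfl | h
    · simp only [if_pos h.le, if_pos (show m + 1 ≤ L by omega)]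
      exact hG.adj_succ h
    · simp only [if_pos le_rfl, if_neg (show ¬m + 1 ≤ m by omega), Nat.sub_self]
      exact hG.adj_of_mem_apex hG.last_mem (hk 0 (by omega)) (hG.apex_ne (hk 0 (by omega)) le_rfl)
    · simp only [if_neg (show ¬m ≤ L by omega), if_neg (show ¬m + 1 ≤ L by omega)]
      refine hG.adj_of_mem_apex (hk _ (by omega)).1 (hk _ (by omega)) fun h' => ?_
      have := hkinj (show m - (L + 1) < A.ncard by omega)
        (show m + 1 - (L + 1) < A.ncard by omega) h'
      omega
  · simp only [if_neg (show ¬L + A.ncard ≤ L by omega), if_pos (Nat.zero_le L)]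
    have hlast := hk (L + A.ncard - (L + 1)) (by omega)
    exact (hG.adj_of_mem_apex hG.zero_mem hlast (hG.apex_ne hlast (Nat.zero_le L))).symm

theorem hasTwoInternallyDisjointPaths [Fintype V] (hL : 1 ≤ L) (hK : 3 ≤ K.ncard)
    (hV : Fintype.card V + 1 = L + K.ncard) {a b : V} (hab : a ≠ b) :
    G.HasTwoInternallyDisjointPaths a b := by
  classical
  obtain ⟨s, hinj, hadj, hclose⟩ := hG.exists_cycle hL hK
  have hN : L + 1 + (K \ {v 0, v L}).ncard = Fintype.card V := by
    have := hG.ncard_apex_add_two hL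
    omega
  rw [hN] at hinj hadj
  rw [show L + (K \ {v 0, v L}).ncard = Fintype.card V - 1 by omega] at hclose
  have himage : (Finset.range (Fintype.card V)).image s = Finset.univ :=
    Finset.eq_univ_of_card _ (by
      rw [Finset.card_image_of_injOn (by simpa using hinj), Finset.card_range])
  have hs : ∀ x, ∃ m < Fintype.card V, s m = x := fun x => by
    have hx : x ∈ (Finset.range (Fintype.card V)).image s := himage ▸ Finset.mem_univ x
    simpa using hx
  obtain ⟨i, hi, rfl⟩ := hs a
  obtain ⟨j, hj, rfl⟩ := hs b
  exact hasTwoInternallyDisjointPaths_of_cycle (by omega) hadj hclose hinj hi hj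
    fun h => hab (h ▸ rfl)

theorem ncard_edgeSet [Fintype V] (hL : 1 ≤ L) :
    G.edgeSet.ncard = K.ncard.choose 2 - 1 + L := by
  classical
  set A := K.toFinset.offDiag.image Sym2.mk.uncurry
  set B := (Finset.range L).image fun i => s(v i, v (i + 1))
  have hA : ∀ a b, s(a, b) ∈ A ↔ a ∈ K ∧ b ∈ K ∧ a ≠ b := fun a b => by
    rw [Sym2.mk_mem_image_offDiag_iff, Set.mem_toFinset, Set.mem_toFinset]
  have hedges : G.edgeSet = ↑(A.erase s(v 0, v L) ∪ B) := by
    ext e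
    induction e using Sym2.ind with
    | _ a b =>
    simp only [mem_edgeSet, hG.adj_iff, Finset.coe_union, Finset.coe_erase, Set.mem_union,
      Set.mem_sdiff, Finset.mem_coe, hA, Set.mem_singleton_iff, B, Finset.mem_image,
      Finset.mem_range, ne_eq, Set.pair_eq_pair_iff, ← Sym2.eq_iff]
    constructor
    · rintro (⟨ha, hb, hab, hne⟩ | ⟨i, hi, he⟩)
      exacts [.inl ⟨⟨ha, hb, hab⟩, hne⟩, .inr ⟨i, hi, he.symm⟩]
    · rintro (⟨⟨ha, hb, hab⟩, hne⟩ | ⟨i, hi, he⟩)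
      exacts [.inl ⟨ha, hb, hab, hne⟩, .inr ⟨i, hi, he.symm⟩]
  have hdisj : Disjoint (A.erase s(v 0, v L)) B := by
    rw [Finset.disjoint_left]
    rintro e he hB
    obtain ⟨i, hi, rfl⟩ := Finset.mem_image.mp hB
    rw [Finset.mem_erase, hA] at he
    have h0 : i = 0 := by
      by_contra h0
      exact hG.notMem i (by omega) (by simpa using hi) he.2.1
    have h1 : i + 1 = L := by
      by_contra h1
      exact hG.notMem (i + 1) (by omega) (by simp at hi; omega) he.2.2.1
    subst h0
    exact he.1 (by rw [← h1])
  have hB : B.card = L := by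
    rw [Finset.card_image_of_injOn fun i hi j hj h => hG.ear_edge_inj (by simpa using hi)
      (by simpa using hj) h, Finset.card_range]
  have hmem : s(v 0, v L) ∈ A :=
    (hA _ _).mpr ⟨hG.zero_mem, hG.last_mem, hG.ne (Nat.zero_le L) le_rfl (by omega)⟩
  rw [hedges, Set.ncard_coe_finset, Finset.card_union_of_disjoint hdisj,
    Finset.card_erase_of_mem hmem, hB, Sym2.card_image_offDiag, Set.ncard_eq_toFinset_card']

theorem mem_image_Icc_iff {m k l : ℕ} (hm : m ≤ L) (hl : l ≤ L) :
    v m ∈ v '' Set.Icc k l ↔ k ≤ m ∧ m ≤ l :=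
  ⟨fun ⟨m', hm', h⟩ => hG.inj m' m (hm'.2.trans hl) hm h ▸ hm', fun h => ⟨m, h, rfl⟩⟩

theorem exists_crossing {x y : V} (p : G.Walk x y) {k l : ℕ} (hl : l ≤ L)
    (hx : x ∈ v '' Set.Icc k l) (hy : y ∉ v '' Set.Icc k l) :
    ∃ m, k ≤ m ∧ m ≤ l ∧ ∃ b ∉ v '' Set.Icc k l, s(v m, b) ∈ p.edges ∧
      ((0 < m ∧ b = v (m - 1)) ∨ (m < L ∧ b = v (m + 1)) ∨
        ((m = 0 ∨ m = L) ∧ b ∈ K \ {v 0, v L})) := by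
  obtain ⟨a, ⟨m, hm, rfl⟩, b, hb, he⟩ := p.exists_mem_edges_of_mem_of_notMem hx hy
  exact ⟨m, hm.1, hm.2, b, hb, he, hG.eq_of_adj (hm.2.trans hl) (p.adj_of_mem_edges he)⟩

theorem apex_eq {i : ℕ} (hi : i < L) {P : G.Walk (v i) (v (i + 1))} {w w' : V}
    (hw : w ∈ K \ {v 0, v L}) (hw' : w' ∈ K \ {v 0, v L})
    (hedges : ∀ e ∈ P.edges,
      e = s(v 0, w) ∨ e = s(w', v L) ∨ ∃ j < L, j ≠ i ∧ e = s(v j, v (j + 1))) :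
    w' = w := by
  set S := v '' Set.Icc 0 i ∪ {w}
  have hmemS : ∀ m, m ≤ L → (v m ∈ S ↔ m ≤ i) := by
    intro m hm
    simp only [S, Set.mem_union, hG.mem_image_Icc_iff hm hi.le, Set.mem_singleton_iff]
    exact ⟨fun h => h.elim (·.2) (absurd · (hG.apex_ne hw hm)),
      fun h => .inl ⟨Nat.zero_le _, h⟩⟩
  -- of the edges of `P`, only `w' v L` can leave `S`, and it does so only if `w' = w`
  obtain ⟨a, ha, b, hb, he⟩ := P.exists_mem_edges_of_mem_of_notMem
    ((hmemS i hi.le).mpr le_rfl) (by rw [hmemS (i + 1) hi]; omega)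
  rcases hedges _ he with h | h | ⟨j, hj, hji, h⟩
  · refine absurd ?_ hb
    rcases Sym2.eq_iff.mp h with ⟨-, rfl⟩ | ⟨-, rfl⟩
    · exact .inr rfl
    · exact (hmemS 0 (Nat.zero_le L)).mpr (Nat.zero_le i)
  · rcases Sym2.eq_iff.mp h with ⟨rfl, -⟩ | ⟨rfl, -⟩
    · rcases ha with ⟨m, hm, rfl⟩ | ha
      · exact absurd rfl (hG.apex_ne hw' (hm.2.trans hi.le))
      · exact ha
    · exact absurd ((hmemS L le_rfl).mp ha) (by omega)
  · rcases Sym2.eq_iff.mp h with ⟨rfl, rfl⟩ | ⟨rfl, rfl⟩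
    · rw [hmemS j (by omega)] at ha
      rw [hmemS (j + 1) hj] at hb
      omega
    · rw [hmemS (j + 1) hj] at ha
      rw [hmemS j (by omega)] at hb
      omega

section Detour

variable {i : ℕ} (hi : i < L) {P : G.Walk (v i) (v (i + 1))}
  (hP : s(v i, v (i + 1)) ∉ P.edges)
include hi hP

theorem ear_edge_mem {j : ℕ} (hj : j < L) (hji : j ≠ i) : s(v j, v (j + 1)) ∈ P.edges := by
  rcases Nat.lt_or_gt_of_ne hji with hji | hji
  · obtain ⟨m, hm1, hm2, b, hb, he, hcase⟩ := hG.exists_crossing P (k := j + 1) hi.le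
      ((hG.mem_image_Icc_iff hi.le hi.le).mpr ⟨by omega, le_rfl⟩)
      (by rw [hG.mem_image_Icc_iff hi hi.le]; omega)
    rcases hcase with ⟨-, rfl⟩ | ⟨-, rfl⟩ | ⟨h, -⟩
    · rw [hG.mem_image_Icc_iff (by omega) hi.le] at hb
      obtain rfl : m = j + 1 := by omega
      rwa [Sym2.eq_swap] at he
    · rw [hG.mem_image_Icc_iff (by omega) hi.le] at hb
      obtain rfl : m = i := by omega
      exact absurd he hP
    · omega
  · obtain ⟨m, hm1, hm2, b, hb, he, hcase⟩ := hG.exists_crossing P.reverse (k := i + 1) hj.le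
      ((hG.mem_image_Icc_iff hi hj.le).mpr ⟨le_rfl, by omega⟩)
      (by rw [hG.mem_image_Icc_iff hi.le hj.le]; omega)
    rw [Walk.edges_reverse, List.mem_reverse] at he
    rcases hcase with ⟨-, rfl⟩ | ⟨-, rfl⟩ | ⟨h, -⟩
    · rw [hG.mem_image_Icc_iff (by omega) hj.le] at hb
      obtain rfl : m = i + 1 := by omega
      exact absurd (by rwa [Sym2.eq_swap] at he) hP
    · rw [hG.mem_image_Icc_iff (by omega) hj.le] at hb
      obtain rfl : m = j := by omega
      exact he
    · omega

theorem exists_apex_edge_zero : ∃ w ∈ K \ {v 0, v L}, s(v 0, w) ∈ P.edges := by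
  obtain ⟨m, -, hm, b, hb, he, hcase⟩ := hG.exists_crossing P (k := 0) hi.le
    ((hG.mem_image_Icc_iff hi.le hi.le).mpr ⟨by omega, le_rfl⟩)
    (by rw [hG.mem_image_Icc_iff hi hi.le]; omega)
  rcases hcase with ⟨-, rfl⟩ | ⟨-, rfl⟩ | ⟨hm0, hbA⟩
  · rw [hG.mem_image_Icc_iff (by omega) hi.le] at hb
    omega
  · rw [hG.mem_image_Icc_iff (by omega) hi.le] at hb
    obtain rfl : m = i := by omega
    exact absurd he hP
  · obtain rfl : m = 0 := by omega
    exact ⟨b, hbA, he⟩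

theorem exists_apex_edge_last : ∃ w ∈ K \ {v 0, v L}, s(w, v L) ∈ P.edges := by
  obtain ⟨m, hm1, hm2, b, hb, he, hcase⟩ := hG.exists_crossing P.reverse (k := i + 1) le_rfl
    ((hG.mem_image_Icc_iff hi le_rfl).mpr ⟨le_rfl, hi⟩)
    (by rw [hG.mem_image_Icc_iff hi.le le_rfl]; omega)
  rw [Walk.edges_reverse, List.mem_reverse] at he
  rcases hcase with ⟨-, rfl⟩ | ⟨hmL, rfl⟩ | ⟨hmL, hbA⟩
  · rw [hG.mem_image_Icc_iff (by omega) le_rfl] at hb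
    obtain rfl : m = i + 1 := by omega
    exact absurd (by rwa [Sym2.eq_swap] at he) hP
  · rw [hG.mem_image_Icc_iff (by omega) le_rfl] at hb
    omega
  · obtain rfl : m = L := by omega
    exact ⟨b, hbA, by rwa [Sym2.eq_swap]⟩

theorem edges_of_length_le {w w' : V} (hw : w ∈ K \ {v 0, v L}) (hw' : w' ∈ K \ {v 0, v L})
    (hw0 : s(v 0, w) ∈ P.edges) (hwL : s(w', v L) ∈ P.edges) (hPpath : P.IsPath)
    (hlen : P.length ≤ L + 1) :
    P.length = L + 1 ∧ ∀ e ∈ P.edges,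
      e = s(v 0, w) ∨ e = s(w', v L) ∨ ∃ j < L, j ≠ i ∧ e = s(v j, v (j + 1)) := by
  classical
  let E := ((Finset.range L).erase i).image (fun j => s(v j, v (j + 1))) ∪ {s(v 0, w), s(w', v L)}
  have hsub : E ⊆ P.edges.toFinset := by
    intro e he
    simp only [E, Finset.mem_union, Finset.mem_image, Finset.mem_erase, Finset.mem_range,
      Finset.mem_insert, Finset.mem_singleton] at he
    rw [List.mem_toFinset]
    rcases he with ⟨j, ⟨hji, hj⟩, rfl⟩ | rfl | rfl
    exacts [hG.ear_edge_mem hi hP hj hji, hw0, hwL]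
  have hcard : E.card = L + 1 := by
    have hdisj : Disjoint (((Finset.range L).erase i).image fun j => s(v j, v (j + 1)))
        {s(v 0, w), s(w', v L)} := by
      simp only [Finset.disjoint_left, Finset.mem_image, Finset.mem_erase, Finset.mem_range,
        Finset.mem_insert, Finset.mem_singleton]
      rintro _ ⟨j, ⟨-, hj⟩, rfl⟩ (h | h)
      · exact hG.apex_notMem_ear_edge hw hj (h ▸ Sym2.mem_mk_right _ _)
      · exact hG.apex_notMem_ear_edge hw' hj (h ▸ Sym2.mem_mk_left _ _)
    have hne : s(v 0, w) ≠ s(w', v L) := by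
      rintro h
      rcases Sym2.eq_iff.mp h with ⟨h1, -⟩ | ⟨h1, -⟩
      exacts [hG.apex_ne hw' (Nat.zero_le L) h1, hG.ne (Nat.zero_le L) le_rfl (by omega) h1]
    rw [Finset.card_union_of_disjoint hdisj, Finset.card_pair hne, Finset.card_image_of_injOn
      (fun a ha b hb h => hG.ear_edge_inj (by simp_all) (by simp_all) h),
      Finset.card_erase_of_mem (Finset.mem_range.mpr hi), Finset.card_range]
    omega
  have hE : E = P.edges.toFinset := Finset.eq_of_subset_of_card_le hsub (by
    rw [List.toFinset_card_of_nodup hPpath.edges_nodup, Walk.length_edges]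
    omega)
  refine ⟨?_, fun e he => ?_⟩
  · rw [← Walk.length_edges, ← List.toFinset_card_of_nodup hPpath.edges_nodup, ← hE, hcard]
  · rw [← List.mem_toFinset, ← hE] at he
    simp only [E, Finset.mem_union, Finset.mem_image, Finset.mem_erase, Finset.mem_range,
      Finset.mem_insert, Finset.mem_singleton] at he
    rcases he with ⟨j, ⟨hji, hj⟩, rfl⟩ | rfl | rfl
    exacts [.inr (.inr ⟨j, hj, hji, rfl⟩), .inl rfl, .inr (.inl rfl)]

end Detour

section Colouring

variable {R : ℕ} {col : Sym2 V → Fin R} (hcol : RainbowTwoConnectedColouring G col)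
include hcol

theorem ear_colour_ne (hL : 3 ≤ L) {j j' : ℕ} (hj : j < L) (hj' : j' < L) (hjj' : j ≠ j') :
    col s(v j, v (j + 1)) ≠ col s(v j', v (j' + 1)) := by
  obtain ⟨i, hi, hij, hij'⟩ : ∃ i < 3, i ≠ j ∧ i ≠ j' := by
    by_contra! h
    have := h 0; have := h 1; have := h 2
    omega
  obtain ⟨P, -, hPr, hP⟩ := hcol.exists_path_notMem_edges (hG.ne (i := i) (j := i + 1)
    (by omega) (by omega) (by omega))
  exact hPr.apply_ne (hG.ear_edge_mem (by omega) hP hj hij.symm)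
    (hG.ear_edge_mem (by omega) hP hj' hij'.symm) fun h => hjj' (hG.ear_edge_inj hj hj' h)

theorem exists_apex_colour (hL : 3 ≤ L) (hR : R ≤ L + 1) {i : ℕ} (hi : i < L) :
    ∃ w ∈ K \ {v 0, v L},
      (col s(v i, v (i + 1)) = col s(v 0, w) ∨ col s(v i, v (i + 1)) = col s(w, v L)) ∧
      ∀ j < L, j ≠ i →
        col s(v j, v (j + 1)) ≠ col s(v 0, w) ∧ col s(v j, v (j + 1)) ≠ col s(w, v L) := by
  obtain ⟨P, hPpath, hPr, hP⟩ := hcol.exists_path_notMem_edges (hG.ne hi.le hi (by omega))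
  obtain ⟨w, hw, hw0⟩ := hG.exists_apex_edge_zero hi hP
  obtain ⟨w', hw', hwL⟩ := hG.exists_apex_edge_last hi hP
  obtain ⟨hlen, hedges⟩ :=
    hG.edges_of_length_le hi hP hw hw' hw0 hwL hPpath (hPr.length_le.trans hR)
  obtain rfl := hG.apex_eq hi hw hw' hedges
  have ear_ne : ∀ {j}, j < L → ∀ {e}, w' ∈ e → s(v j, v (j + 1)) ≠ e :=
    fun hj _ he h => hG.apex_notMem_ear_edge hw' hj (h ▸ he)
  refine ⟨w', hw', ?_, fun j hj hji => ⟨?_, ?_⟩⟩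
  · have huniv : (P.edges.map col).toFinset = Finset.univ := Finset.eq_univ_of_card _ (by
      rw [List.toFinset_card_of_nodup hPr, List.length_map, Walk.length_edges, Fintype.card_fin]
      have := hPr.length_le
      omega)
    have hmem : col s(v i, v (i + 1)) ∈ (P.edges.map col).toFinset := huniv ▸ Finset.mem_univ _
    obtain ⟨f, hf, hcf⟩ := List.mem_map.mp (List.mem_toFinset.mp hmem)
    rcases hedges f hf with rfl | rfl | ⟨j, hj, hji, rfl⟩
    · exact .inl hcf.symm
    · exact .inr hcf.symm
    · exact absurd hcf (hG.ear_colour_ne hcol hL hj hi hji)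
  · exact hPr.apply_ne (hG.ear_edge_mem hi hP hj hji) hw0 (ear_ne hj (Sym2.mem_mk_right _ _))
  · exact hPr.apply_ne (hG.ear_edge_mem hi hP hj hji) hwL (ear_ne hj (Sym2.mem_mk_left _ _))

theorem ncard_le_of_rainbow [Finite V] (hL : 3 ≤ L) (hR : R ≤ L + 1) : L + 2 ≤ K.ncard := by
  have : Nonempty V := ⟨v 0⟩
  choose! w hwA hwi hwj using fun i (hi : i < L) => hG.exists_apex_colour hcol hL hR hi
  have hinj : Set.InjOn w (Set.Iio L) := by
    intro i hi j hj h
    by_contra hij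
    rcases hwi i hi with hc | hc
    · exact (hwj j hj i hi hij).1 (h ▸ hc)
    · exact (hwj j hj i hi hij).2 (h ▸ hc)
  have := Set.ncard_le_ncard_of_injOn (s := Set.Iio L) w (fun i hi => hwA i hi) hinj
  rw [Set.ncard_Iio_nat] at this
  have := hG.ncard_apex_add_two (by omega)
  omega

end Colouring

theorem twoConnected [Fintype V] (hL : 1 ≤ L) (hK : 3 ≤ K.ncard)
    (hV : Fintype.card V + 1 = L + K.ncard) : TwoConnected G :=
  twoConnected_of_hasTwoInternallyDisjointPaths (by omega) fun _ _ hab =>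
    hG.hasTwoInternallyDisjointPaths hL hK hV hab

theorem le_rc2 [Fintype V] (hL : 3 ≤ L) (hK : 3 ≤ K.ncard) (hKL : K.ncard < L + 2)
    (hV : Fintype.card V + 1 = L + K.ncard) : L + 2 ≤ rc2 G := by
  refine le_rc2_of_forall (exists_rainbowTwoConnectedColouring fun _ _ hab =>
    hG.hasTwoInternallyDisjointPaths (by omega) hK hV hab) fun R col hcol => ?_
  by_contra! h
  have := hG.ncard_le_of_rainbow hcol hL (by omega)
  omega

theorem comap_equiv {W : Type*} (e : V ≃ W) :
    IsEarGraph (G.comap e.symm) (e '' K) (fun i => e (v i)) L where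
  inj i j hi hj h := hG.inj i j hi hj (e.injective h)
  zero_mem := Set.mem_image_of_mem e hG.zero_mem
  last_mem := Set.mem_image_of_mem e hG.last_mem
  notMem i hi hiL := by
    rw [e.injective.mem_set_image]
    exact hG.notMem i hi hiL
  adj_iff a b := by
    simp only [comap_adj, hG.adj_iff, Set.mem_image_equiv, ne_eq, Set.pair_eq_pair_iff,
      Equiv.symm_apply_eq, e.symm.injective.eq_iff]

end IsEarGraph

theorem le_s2 {n r : ℕ} {G : SimpleGraph (Fin n)} (hG : TwoConnected G) (hr : r ≤ rc2 G) :
    G.edgeSet.ncard ≤ s2 n r :=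
  le_csSup ⟨(Set.univ : Set (Sym2 (Fin n))).ncard, by
    rintro m ⟨H, -, -, rfl⟩
    exact Set.ncard_le_ncard (Set.subset_univ _)⟩ ⟨G, hG, hr, rfl⟩

theorem stmt15_general (n r : ℕ) (hr : n + 4 ≤ 2 * r) (hrn : r ≤ n - 1)
    {V : Type*} [Fintype V] (hcard : Fintype.card V = n)
    (K : Set V) (hK : K.ncard = n - r + 3)
    (v : ℕ → V)
    (hvinj : ∀ i j, i ≤ r - 2 → j ≤ r - 2 → v i = v j → i = j)
    (hv0 : v 0 ∈ K) (hvlast : v (r - 2) ∈ K)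
    (hvint : ∀ i, 0 < i → i < r - 2 → v i ∉ K)
    (G : SimpleGraph V)
    (hadj : ∀ a b : V, G.Adj a b ↔
      ((a ∈ K ∧ b ∈ K ∧ a ≠ b ∧ ({a, b} : Set V) ≠ {v 0, v (r - 2)}) ∨
       ∃ i, i + 1 ≤ r - 2 ∧ ({a, b} : Set V) = {v i, v (i + 1)})) :
    TwoConnected G ∧ G.edgeSet.ncard = Nat.choose (n - r + 3) 2 + (r - 3) ∧
      r ≤ rc2 G ∧ Nat.choose (n - r + 3) 2 + (r - 3) ≤ s2 n r := by
  have hG : IsEarGraph G K v (r - 2) := ⟨hvinj, hv0, hvlast, hvint, hadj⟩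
  let e := Fintype.equivFinOfCardEq hcard
  have hG' := hG.comap_equiv e
  have hK' : (e '' K).ncard = n - r + 3 := by rw [Set.ncard_image_of_injective K e.injective, hK]
  have hV' : Fintype.card (Fin n) = n := Fintype.card_fin n
  have hcount : (n - r + 3).choose 2 - 1 + (r - 2) = (n - r + 3).choose 2 + (r - 3) := by
    have : 1 ≤ (n - r + 3).choose 2 := Nat.choose_pos (by omega)
    omega
  refine ⟨hG.twoConnected (by omega) (by omega) (by omega), ?_, ?_, ?_⟩
  · rw [hG.ncard_edgeSet (by omega), hK, hcount]
  · have := hG.le_rc2 (by omega) (by omega) (by omega) (by omega)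
    omega
  · rw [← hcount, ← hK', ← hG'.ncard_edgeSet (by omega)]
    refine le_s2 (hG'.twoConnected (by omega) (by omega) (by omega)) ?_
    have := hG'.le_rc2 (by omega) (by omega) (by omega) (by omega)
    omega

/-- For n ≥ 6 and n/2 + 2 ≤ r ≤ n − 1, the graph obtained from a
complete graph on a set K of n − r + 3 vertices by deleting the edge
{v 0, v (r−2)} and attaching an (r−2)-ear v 0, v 1, …, v (r−2) at v 0 and
v (r−2) is 2-connected, has C(n−r+3, 2) + (r−3) edges, and satisfies rc₂ ≥ r;
consequently s₂(n,r) ≥ C(n−r+3, 2) + (r−3). -/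
theorem stmt15 (n r : ℕ) (hn : 6 ≤ n) (hr : n + 4 ≤ 2 * r) (hrn : r ≤ n - 1)
    {V : Type*} [Fintype V] (hcard : Fintype.card V = n)
    (K : Set V) (hK : K.ncard = n - r + 3)
    (v : ℕ → V)
    (hvinj : ∀ i j, i ≤ r - 2 → j ≤ r - 2 → v i = v j → i = j)
    (hv0 : v 0 ∈ K) (hvlast : v (r - 2) ∈ K)
    (hvint : ∀ i, 0 < i → i < r - 2 → v i ∉ K)
    (G : SimpleGraph V)
    (hadj : ∀ a b : V, G.Adj a b ↔
      ((a ∈ K ∧ b ∈ K ∧ a ≠ b ∧ ({a, b} : Set V) ≠ {v 0, v (r - 2)}) ∨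
       ∃ i, i + 1 ≤ r - 2 ∧ ({a, b} : Set V) = {v i, v (i + 1)})) :
    TwoConnected G ∧ G.edgeSet.ncard = Nat.choose (n - r + 3) 2 + (r - 3) ∧
      r ≤ rc2 G ∧ Nat.choose (n - r + 3) 2 + (r - 3) ≤ s2 n r :=
  stmt15_general n r hr hrn hcard K hK v hvinj hv0 hvlast hvint G hadj
end

section
/- Let n ≥ 6 and let G be a Θ-graph on n vertices, consisting of three internally vertex-disjoint paths Q₁, Q₂, Q₃ joining vertices x and y, where Q₁ and Q₂ each have at least 3 vertices. Suppose G has a rainbow 2-connected edge-colouring using at most n − 2 colours. Then no colour appears on three or more edges of G. -/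
open SimpleGraph

/-!
Every cycle of a Θ-graph passes through both ends `x` and `y`, so deleting the edges at `y`
leaves a forest and paths avoiding `y` are unique (likewise for `x`). Two distinct edges avoiding
`y` lie on a common path `W` avoiding `y`; of the two internally disjoint rainbow paths between
the ends of `W` one avoids `y`, hence equals `W`, so the two edges get different colours. Thus in
every pair of equally coloured edges one edge meets `y` and one meets `x`, and three equally
coloured edges must be `xy`, an edge `b` at `y` and an edge `c` at `x`. No other edge has their
colour, so the remaining `n - 2` edges use at most `n - 3` colours and two of them, `g` at `x` and
`h` at `y`, share a colour. Finally, a rainbow path from the other end `z` of `c` to `y` must pass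
through `x`, so it is `c` followed by a whole branch; it avoids `xy` and `b`, so that branch is the
third one, which carries both `g` and `h`.
-/

namespace SimpleGraph.Walk

variable {V : Type*} {G : SimpleGraph V}

lemma IsPath.eq_of_start_mem {u v : V} {p : G.Walk u v} (hp : p.IsPath) {e e' : Sym2 V}
    (he : e ∈ p.edges) (he' : e' ∈ p.edges) (hu : u ∈ e) (hu' : u ∈ e') : e = e' := by
  obtain ⟨a, rfl⟩ := Sym2.mem_iff_exists.1 hu
  obtain ⟨b, rfl⟩ := Sym2.mem_iff_exists.1 hu'
  rw [← hp.snd_of_toSubgraph_adj (adj_toSubgraph_iff_mem_edges.2 he),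
    ← hp.snd_of_toSubgraph_adj (adj_toSubgraph_iff_mem_edges.2 he')]

lemma IsPath.notMem_support_dropLast {u v : V} {p : G.Walk u v} (hp : p.IsPath)
    (hnil : ¬p.Nil) : v ∉ p.dropLast.support := by
  rw [← concat_dropLast (p.adj_penultimate hnil), concat_isPath_iff] at hp
  exact hp.2

lemma mem_edges_dropLast {u v : V} {p : G.Walk u v} {e : Sym2 V} (he : e ∈ p.edges)
    (hv : v ∉ e) : e ∈ p.dropLast.edges := by
  have hnil : ¬p.Nil := fun h => by simp [edges_eq_nil.2 h] at he
  rw [← concat_dropLast (p.adj_penultimate hnil), edges_concat] at he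
  exact (by simpa using he : _ ∨ _).resolve_right (by rintro rfl; simp at hv)

lemma isPath_append {u v w : V} {p : G.Walk u v} {q : G.Walk v w} (hp : p.IsPath)
    (hq : q.IsPath) (hpq : ∀ z ∈ p.support, z ∈ q.support → z = v) : (p.append q).IsPath := by
  rw [isPath_def, support_append, List.nodup_append]
  refine ⟨hp.support_nodup, hq.support_nodup.tail, fun z hzp z' hzq hzz => ?_⟩
  subst hzz
  obtain rfl := hpq z hzp (List.mem_of_mem_tail hzq)
  have := hq.support_nodup
  rw [← cons_tail_support] at this
  exact (List.nodup_cons.1 this).1 hzq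

lemma IsPath.card_toFinset_support_sdiff_add_one [DecidableEq V] {u v : V} {p : G.Walk u v}
    (hp : p.IsPath) (huv : u ≠ v) : (p.support.toFinset \ {u, v}).card + 1 = p.length := by
  have hsub : ({u, v} : Finset V) ⊆ p.support.toFinset := by simp [Finset.insert_subset_iff]
  have hlen : p.length ≠ 0 := fun h => huv (eq_of_length_eq_zero h)
  rw [Finset.card_sdiff_of_subset hsub, List.toFinset_card_of_nodup hp.support_nodup,
    length_support, Finset.card_pair huv]
  omega

lemma IsCycle.exists_ne_mem_edges {a w : V} {c : G.Walk a a} (hc : c.IsCycle)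
    (hw : w ∈ c.support) : ∃ b b', b ≠ b' ∧ s(w, b) ∈ c.edges ∧ s(w, b') ∈ c.edges := by
  obtain ⟨b, b', hbb', hset⟩ := Set.ncard_eq_two.1 (hc.ncard_neighborSet_toSubgraph_eq_two hw)
  have hb : b ∈ c.toSubgraph.neighborSet w := by simp [hset]
  have hb' : b' ∈ c.toSubgraph.neighborSet w := by simp [hset]
  exact ⟨b, b', hbb', adj_toSubgraph_iff_mem_edges.1 hb, adj_toSubgraph_iff_mem_edges.1 hb'⟩

/-- At an inner vertex of `P` the cycle has two edges, both on `P`, so it keeps following `P`. -/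
lemma IsCycle.exists_mem_edges_end_mem {a u v : V} {c : G.Walk a a} (hc : c.IsCycle)
    {P : G.Walk u v} (hP : P.IsPath)
    (hint : ∀ w ∈ P.support, w ≠ u → w ≠ v → ∀ e ∈ G.edgeSet, w ∈ e → e ∈ P.edges)
    {e : Sym2 V} (he : e ∈ P.edges) (hec : e ∈ c.edges) : ∃ e' ∈ c.edges, v ∈ e' := by
  induction P generalizing e with
  | nil => simp at he
  | @cons u w v h t ih =>
    rw [cons_isPath_iff] at hP
    have hint' : ∀ w' ∈ t.support, w' ≠ w → w' ≠ v → ∀ e ∈ G.edgeSet, w' ∈ e → e ∈ t.edges := by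
      intro w' hw' hw'w hw'v e heG hw'e
      have hw'u : w' ≠ u := by rintro rfl; exact hP.2 hw'
      rcases List.mem_cons.1 (hint w' (by simp [hw']) hw'u hw'v e heG hw'e) with rfl | h
      · rcases Sym2.mem_iff.1 hw'e with h | h <;> contradiction
      · exact h
    rcases List.mem_cons.1 he with rfl | he
    · by_cases hwv : w = v
      · subst hwv
        exact ⟨_, hec, by simp⟩
      have hwt : ∀ b, s(w, b) ∈ c.edges → b = u ∨ s(w, b) ∈ t.edges := by
        intro b hb
        rcases List.mem_cons.1 (hint w (by simp) h.ne' hwv _ (c.edges_subset_edgeSet hb)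
          (by simp)) with h' | h'
        · left
          simpa [h.ne'] using h'
        · exact Or.inr h'
      obtain ⟨b, b', hbb', hb, hb'⟩ :=
        hc.exists_ne_mem_edges (c.mem_support_of_mem_edges hec (by simp : w ∈ s(u, w)))
      rcases hwt b hb with rfl | hbt
      · rcases hwt b' hb' with rfl | hb't
        · exact absurd rfl hbb'
        · exact ih hP.1 hint' hb't hb'
      · exact ih hP.1 hint' hbt hb
    · exact ih hP.1 hint' he hec

/-- Deleting the edges at a vertex `y` that lies on every cycle leaves a forest, in which paths
are unique. -/
lemma IsPath.eq_of_notMem_support {y : V}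
    (hcyc : ∀ a (c : G.Walk a a), c.IsCycle → ∃ e ∈ c.edges, y ∈ e) {u v : V}
    {p q : G.Walk u v} (hp : p.IsPath) (hq : q.IsPath) (hyp : y ∉ p.support)
    (hyq : y ∉ q.support) : p = q := by
  set H := G.deleteEdges {e | y ∈ e}
  have hH : H.IsAcyclic := by
    intro a c hc
    obtain ⟨e, he, hye⟩ := hcyc a (c.mapLe (G.deleteEdges_le _)) ((isCycle_mapLe _).2 hc)
    rw [edges_mapLe_eq_edges] at he
    have := c.edges_subset_edgeSet he
    rw [edgeSet_deleteEdges] at this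
    exact this.2 hye
  have hsub : ∀ r : G.Walk u v, y ∉ r.support → ∀ e ∈ r.edges, e ∈ H.edgeSet := by
    intro r hr e he
    rw [edgeSet_deleteEdges]
    exact ⟨r.edges_subset_edgeSet he, fun hye => hr (mem_support_of_mem_edges he hye)⟩
  have := congrArg Subtype.val <| (hH.subsingleton_path u v).elim
    ⟨p.transfer H (hsub p hyp), hp.transfer _⟩ ⟨q.transfer H (hsub q hyq), hq.transfer _⟩
  exact ext_support (by simpa using congrArg Walk.support this)

end SimpleGraph.Walk

open SimpleGraph Walk

lemma IsRainbowWalk.eq_of_color_eq {V α : Type*} {G : SimpleGraph V} {u v : V}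
    {col : Sym2 V → α} {p : G.Walk u v} (hp : IsRainbowWalk col p) {e f : Sym2 V}
    (he : e ∈ p.edges) (hf : f ∈ p.edges) (hef : col e = col f) : e = f :=
  List.inj_on_of_nodup_map hp he hf hef

namespace RainbowTwoConnectedColouring

variable {V α : Type*} {G : SimpleGraph V} {col : Sym2 V → α}

/-- Of the two internally disjoint rainbow paths, one avoids `y`, so it is the unique such path. -/
lemma isRainbowWalk_of_notMem_support (hcol : RainbowTwoConnectedColouring G col) {y : V}
    (hcyc : ∀ a (c : G.Walk a a), c.IsCycle → ∃ e ∈ c.edges, y ∈ e) {u v : V}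
    {W : G.Walk u v} (hW : W.IsPath) (hnil : ¬W.Nil) (hy : y ∉ W.support) :
    IsRainbowWalk col W := by
  have huv : u ≠ v := by
    rintro rfl
    exact hnil (isPath_iff_nil.1 hW)
  obtain ⟨p, q, hp, hq, -, hpr, hqr, hpq⟩ := hcol u v huv
  by_cases hyp : y ∈ p.support
  · have hyq : y ∉ q.support := fun hyq => (hpq y hyp hyq).elim
      (fun h => hy (h ▸ W.start_mem_support)) (fun h => hy (h ▸ W.end_mem_support))
    rwa [hW.eq_of_notMem_support hcyc hq hy hyq]
  · rwa [hW.eq_of_notMem_support hcyc hp hy hyp]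

lemma exists_isRainbowWalk_mem_support (hcol : RainbowTwoConnectedColouring G col) {x : V}
    (hcyc : ∀ a (c : G.Walk a a), c.IsCycle → ∃ e ∈ c.edges, x ∈ e) {u v : V} (huv : u ≠ v) :
    ∃ r : G.Walk u v, r.IsPath ∧ IsRainbowWalk col r ∧ x ∈ r.support := by
  obtain ⟨p, q, hp, hq, hpq, hpr, hqr, -⟩ := hcol u v huv
  by_cases hxp : x ∈ p.support
  · exact ⟨p, hp, hpr, hxp⟩
  by_cases hxq : x ∈ q.support
  · exact ⟨q, hq, hqr, hxq⟩
  exact absurd (hp.eq_of_notMem_support hcyc hq hxp hxq) hpq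

end RainbowTwoConnectedColouring

structure IsTheta {V : Type*} (G : SimpleGraph V) {x y : V} (Q : Fin 3 → G.Walk x y) : Prop where
  ne : x ≠ y
  isPath : ∀ i, (Q i).IsPath
  eq_or_eq_of_mem_support :
    ∀ i j, i ≠ j → ∀ w, w ∈ (Q i).support → w ∈ (Q j).support → w = x ∨ w = y
  edges_disjoint : ∀ i j, i ≠ j → (Q i).edges.Disjoint (Q j).edges
  mem_edgeSet : ∀ e, e ∈ G.edgeSet ↔ ∃ i, e ∈ (Q i).edges

namespace IsTheta

variable {V α : Type*} {G : SimpleGraph V} {x y : V} {Q : Fin 3 → G.Walk x y}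
  {col : Sym2 V → α}

lemma of_two_le_length (hxy : x ≠ y) (hpath : ∀ i, (Q i).IsPath)
    (hdisj : ∀ i j, i ≠ j → ∀ w, w ∈ (Q i).support → w ∈ (Q j).support → w = x ∨ w = y)
    (hedges : ∀ e, e ∈ G.edgeSet ↔ ∃ i, e ∈ (Q i).edges)
    (hQ0 : 2 ≤ (Q 0).length) (hQ1 : 2 ≤ (Q 1).length) : IsTheta G Q where
  ne := hxy
  isPath := hpath
  eq_or_eq_of_mem_support := hdisj
  mem_edgeSet := hedges
  edges_disjoint i j hij e hi hj := by
    have he : e = s(x, y) := by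
      induction e with
      | _ a b =>
        have hab := (Q i).adj_of_mem_edges hi
        rcases hdisj i j hij a ((Q i).fst_mem_support_of_mem_edges hi)
          ((Q j).fst_mem_support_of_mem_edges hj) with rfl | rfl <;>
        rcases hdisj i j hij b ((Q i).snd_mem_support_of_mem_edges hi)
          ((Q j).snd_mem_support_of_mem_edges hj) with rfl | rfl
        all_goals first | exact absurd rfl hab.ne | rfl | exact Sym2.eq_swap
    subst he
    have hshort : ∀ k, 2 ≤ (Q k).length → s(x, y) ∉ (Q k).edges := fun k hk hmem => by
      rw [(hpath k).eq_adj_toWalk_of_mem_edges hmem, Adj.length_toWalk] at hk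
      omega
    have fin_three : ∀ i j : Fin 3, i ≠ j → (i = 0 ∨ i = 1) ∨ (j = 0 ∨ j = 1) := by decide
    rcases fin_three i j hij with (rfl | rfl) | (rfl | rfl)
    exacts [hshort 0 hQ0 hi, hshort 1 hQ1 hi, hshort 0 hQ0 hj, hshort 1 hQ1 hj]

lemma reverse (hQ : IsTheta G Q) : IsTheta G fun i => (Q i).reverse where
  ne := hQ.ne.symm
  isPath i := (hQ.isPath i).reverse
  eq_or_eq_of_mem_support i j hij w hi hj := by
    simpa [or_comm] using
      hQ.eq_or_eq_of_mem_support i j hij w (by simpa using hi) (by simpa using hj)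
  edges_disjoint i j hij := by simpa using hQ.edges_disjoint i j hij
  mem_edgeSet e := by simpa using hQ.mem_edgeSet e

lemma mem_edges_of_mem_support (hQ : IsTheta G Q) {i : Fin 3} {w : V}
    (hw : w ∈ (Q i).support) (hwx : w ≠ x) (hwy : w ≠ y) {e : Sym2 V} (he : e ∈ G.edgeSet)
    (hwe : w ∈ e) : e ∈ (Q i).edges := by
  obtain ⟨j, hj⟩ := (hQ.mem_edgeSet e).1 he
  obtain rfl | hij := eq_or_ne i j
  · exact hj
  · exact ((hQ.eq_or_eq_of_mem_support i j hij w hw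
      (mem_support_of_mem_edges hj hwe)).elim hwx hwy).elim

lemma exists_mem_edges_of_isCycle (hQ : IsTheta G Q) (a : V) (c : G.Walk a a)
    (hc : c.IsCycle) : ∃ e ∈ c.edges, y ∈ e := by
  obtain ⟨d, hd⟩ := List.exists_mem_of_ne_nil c.edges (edges_eq_nil.not.2 hc.not_nil)
  obtain ⟨i, hi⟩ := (hQ.mem_edgeSet d).1 (c.edges_subset_edgeSet hd)
  exact hc.exists_mem_edges_end_mem (hQ.isPath i)
    (fun w hw hwx hwy e he hwe => hQ.mem_edges_of_mem_support hw hwx hwy he hwe) hi hd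

lemma exists_eq_of_isPath (hQ : IsTheta G Q) {P : G.Walk x y} (hP : P.IsPath) :
    ∃ t, P = Q t := by
  obtain ⟨w, h, P', rfl⟩ := exists_eq_cons_of_ne hQ.ne P
  obtain ⟨t, ht⟩ := (hQ.mem_edgeSet s(x, w)).1 h
  obtain ⟨w', h', Q', hQt⟩ := exists_eq_cons_of_ne hQ.ne (Q t)
  have hpt := hQ.isPath t
  rw [hQt] at ht hpt
  obtain rfl : w = w' :=
    Sym2.congr_right.1 (hpt.eq_of_start_mem ht (by simp) (by simp) (by simp))
  rw [cons_isPath_iff] at hP hpt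
  refine ⟨t, ?_⟩
  rw [hQt, hP.1.eq_of_notMem_support hQ.reverse.exists_mem_edges_of_isCycle hpt.1 hP.2 hpt.2]

lemma exists_isPath_notMem_support (hQ : IsTheta G Q) {e f : Sym2 V} (he : e ∈ G.edgeSet)
    (hf : f ∈ G.edgeSet) (hye : y ∉ e) (hyf : y ∉ f) :
    ∃ (u v : V) (W : G.Walk u v), W.IsPath ∧ y ∉ W.support ∧ e ∈ W.edges ∧ f ∈ W.edges := by
  obtain ⟨i, hi⟩ := (hQ.mem_edgeSet e).1 he
  obtain ⟨j, hj⟩ := (hQ.mem_edgeSet f).1 hf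
  have hy : ∀ k, y ∉ (Q k).dropLast.support := fun k =>
    (hQ.isPath k).notMem_support_dropLast (not_nil_of_ne hQ.ne)
  obtain rfl | hij := eq_or_ne i j
  · exact ⟨_, _, (Q i).dropLast, (hQ.isPath i).dropLast, hy i, mem_edges_dropLast hi hye,
      mem_edges_dropLast hj hyf⟩
  have hsub : ∀ k, (Q k).dropLast.support ⊆ (Q k).support := fun k => by
    rw [support_dropLast (not_nil_of_ne hQ.ne)]
    exact List.dropLast_subset _
  have hW : ((Q i).dropLast.reverse.append (Q j).dropLast).IsPath := by
    refine isPath_append (hQ.isPath i).dropLast.reverse (hQ.isPath j).dropLast fun z hzi hzj => ?_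
    rw [support_reverse, List.mem_reverse] at hzi
    exact (hQ.eq_or_eq_of_mem_support i j hij z (hsub i hzi) (hsub j hzj)).resolve_right
      fun h => hy i (h ▸ hzi)
  refine ⟨_, _, _, hW, ?_, ?_, ?_⟩
  · rw [mem_support_append_iff, support_reverse, List.mem_reverse]
    exact not_or.2 ⟨hy i, hy j⟩
  · rw [edges_append, edges_reverse]
    exact List.mem_append_left _ (List.mem_reverse.2 (mem_edges_dropLast hi hye))
  · rw [edges_append]
    exact List.mem_append_right _ (mem_edges_dropLast hj hyf)

lemma ncard_edgeSet [Fintype V] (hQ : IsTheta G Q) (hverts : ∀ w, ∃ i, w ∈ (Q i).support) :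
    G.edgeSet.ncard = Fintype.card V + 1 := by
  classical
  have hE : G.edgeSet = ↑(Finset.univ.biUnion fun i => (Q i).edges.toFinset) := by
    ext e
    simp [hQ.mem_edgeSet]
  have hV : (Finset.univ : Finset V) =
      {x, y} ∪ Finset.univ.biUnion fun i => (Q i).support.toFinset \ {x, y} := by
    ext w
    obtain ⟨i, hi⟩ := hverts w
    by_cases hw : w = x ∨ w = y
    · simp [hw]
    · simp only [Finset.mem_univ, Finset.mem_union, Finset.mem_insert, Finset.mem_singleton,
        Finset.mem_biUnion, Finset.mem_sdiff, List.mem_toFinset, true_iff]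
      exact Or.inr ⟨i, trivial, hi, by simpa using hw⟩
  have hVcard := congrArg Finset.card hV
  rw [Finset.card_union_of_disjoint (by simp [Finset.disjoint_left]), Finset.card_biUnion
    (fun i _ j _ hij => Finset.disjoint_left.2 fun w hwi hwj => by
      simp only [Finset.mem_sdiff, List.mem_toFinset, Finset.mem_insert,
        Finset.mem_singleton] at hwi hwj
      exact hwi.2 (hQ.eq_or_eq_of_mem_support i j hij w hwi.1 hwj.1)),
    Finset.card_univ, Finset.card_pair hQ.ne, Fin.sum_univ_three] at hVcard
  rw [hE, Set.ncard_coe_finset, Finset.card_biUnion (fun i _ j _ hij =>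
      List.disjoint_toFinset_iff_disjoint.2 (hQ.edges_disjoint i j hij)), Fin.sum_univ_three]
  simp only [List.toFinset_card_of_nodup (hQ.isPath _).isTrail.edges_nodup, length_edges]
  have h₀ := (hQ.isPath 0).card_toFinset_support_sdiff_add_one hQ.ne
  have h₁ := (hQ.isPath 1).card_toFinset_support_sdiff_add_one hQ.ne
  have h₂ := (hQ.isPath 2).card_toFinset_support_sdiff_add_one hQ.ne
  omega

lemma mem_or_mem_of_color_eq (hQ : IsTheta G Q) (hcol : RainbowTwoConnectedColouring G col)
    {e f : Sym2 V} (he : e ∈ G.edgeSet) (hf : f ∈ G.edgeSet) (hef : e ≠ f)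
    (hc : col e = col f) : y ∈ e ∨ y ∈ f := by
  by_contra! h
  obtain ⟨u, v, W, hW, hyW, heW, hfW⟩ := hQ.exists_isPath_notMem_support he hf h.1 h.2
  have hnil : ¬W.Nil := fun hn => by simp [edges_eq_nil.2 hn] at heW
  exact hef ((hcol.isRainbowWalk_of_notMem_support hQ.exists_mem_edges_of_isCycle hW hnil
    hyW).eq_of_color_eq heW hfW hc)

lemma mem_edges_of_start_mem (hQ : IsTheta G Q) {t : Fin 3} {e₁ e₂ e₃ : Sym2 V}
    (h₁ : e₁ ∈ G.edgeSet) (h₂ : e₂ ∈ G.edgeSet) (h₃ : e₃ ∈ G.edgeSet)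
    (h₁₂ : e₁ ≠ e₂) (h₁₃ : e₁ ≠ e₃) (h₂₃ : e₂ ≠ e₃) (hx₁ : x ∈ e₁) (hx₂ : x ∈ e₂)
    (hx₃ : x ∈ e₃) (ht₁ : e₁ ∉ (Q t).edges) (ht₂ : e₂ ∉ (Q t).edges) : e₃ ∈ (Q t).edges := by
  obtain ⟨i₁, hi₁⟩ := (hQ.mem_edgeSet e₁).1 h₁
  obtain ⟨i₂, hi₂⟩ := (hQ.mem_edgeSet e₂).1 h₂
  obtain ⟨i₃, hi₃⟩ := (hQ.mem_edgeSet e₃).1 h₃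
  have hne : ∀ {i j e f}, e ∈ (Q i).edges → f ∈ (Q j).edges → x ∈ e → x ∈ f → e ≠ f →
      i ≠ j := by
    rintro i j e f he hf hxe hxf hef rfl
    exact hef ((hQ.isPath i).eq_of_start_mem he hf hxe hxf)
  have fin_three : ∀ a b c d : Fin 3, a ≠ b → a ≠ c → b ≠ c → a ≠ d → b ≠ d → c = d := by
    decide
  rwa [← fin_three i₁ i₂ i₃ t (hne hi₁ hi₂ hx₁ hx₂ h₁₂) (hne hi₁ hi₃ hx₁ hx₃ h₁₃)
    (hne hi₂ hi₃ hx₂ hx₃ h₂₃) (by rintro rfl; exact ht₁ hi₁) (by rintro rfl; exact ht₂ hi₂)]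

lemma mem_edges_of_end_mem (hQ : IsTheta G Q) {t : Fin 3} {e₁ e₂ e₃ : Sym2 V}
    (h₁ : e₁ ∈ G.edgeSet) (h₂ : e₂ ∈ G.edgeSet) (h₃ : e₃ ∈ G.edgeSet)
    (h₁₂ : e₁ ≠ e₂) (h₁₃ : e₁ ≠ e₃) (h₂₃ : e₂ ≠ e₃) (hy₁ : y ∈ e₁) (hy₂ : y ∈ e₂)
    (hy₃ : y ∈ e₃) (ht₁ : e₁ ∉ (Q t).edges) (ht₂ : e₂ ∉ (Q t).edges) : e₃ ∈ (Q t).edges := by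
  simpa using hQ.reverse.mem_edges_of_start_mem (t := t) h₁ h₂ h₃ h₁₂ h₁₃ h₂₃ hy₁ hy₂ hy₃
    (by simpa using ht₁) (by simpa using ht₂)

lemma mem_edges_of_mem_support_snd (hQ : IsTheta G Q) (i : Fin 3) {r : G.Walk (Q i).snd y}
    (hr : r.IsPath) (hx : x ∈ r.support) :
    s(x, (Q i).snd) ∈ r.edges ∧ ∃ t ≠ i, ∀ e ∈ (Q t).edges, e ∈ r.edges := by
  classical
  have hxz : G.Adj x (Q i).snd := (Q i).adj_snd (not_nil_of_ne hQ.ne)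
  have hyr : y ∉ (r.takeUntil x hx).support := endpoint_notMem_support_takeUntil hr hx hQ.ne.symm
  have hzy : y ≠ (Q i).snd := fun h => hyr (by convert (r.takeUntil x hx).start_mem_support)
  have h₁ : r.takeUntil x hx = hxz.symm.toWalk :=
    (hr.takeUntil hx).eq_of_notMem_support hQ.exists_mem_edges_of_isCycle hxz.symm.isPath_toWalk
      hyr (by simp [hzy, hQ.ne.symm])
  have hc : s(x, (Q i).snd) ∈ (r.takeUntil x hx).edges := by simp [h₁, Sym2.eq_swap]
  obtain ⟨t, ht⟩ := hQ.exists_eq_of_isPath (hr.dropUntil hx)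
  refine ⟨edges_takeUntil_subset_edges _ _ hc, t, ?_,
    fun e he => edges_dropUntil_subset_edges _ _ (ht ▸ he)⟩
  rintro rfl
  exact hr.isTrail.disjoint_edges_takeUntil_dropUntil hx hc
    (by rw [ht]; exact mk_start_snd_mem_edges (not_nil_of_ne hQ.ne))

lemma eq_or_eq_or_eq_of_color_eq (hQ : IsTheta G Q) (hcol : RainbowTwoConnectedColouring G col)
    {e₁ e₂ e₃ : Sym2 V} (h₁ : e₁ ∈ G.edgeSet) (h₂ : e₂ ∈ G.edgeSet) (h₃ : e₃ ∈ G.edgeSet)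
    (h₁₂ : e₁ ≠ e₂) (h₁₃ : e₁ ≠ e₃) (h₂₃ : e₂ ≠ e₃) (c₁₂ : col e₁ = col e₂)
    (c₂₃ : col e₂ = col e₃) : e₁ = s(x, y) ∨ e₂ = s(x, y) ∨ e₃ = s(x, y) := by
  simp only [← Sym2.mem_and_mem_iff hQ.ne]
  have := hQ.mem_or_mem_of_color_eq hcol h₁ h₂ h₁₂ c₁₂
  have := hQ.mem_or_mem_of_color_eq hcol h₁ h₃ h₁₃ (c₁₂.trans c₂₃)
  have := hQ.mem_or_mem_of_color_eq hcol h₂ h₃ h₂₃ c₂₃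
  have := hQ.reverse.mem_or_mem_of_color_eq hcol h₁ h₂ h₁₂ c₁₂
  have := hQ.reverse.mem_or_mem_of_color_eq hcol h₁ h₃ h₁₃ (c₁₂.trans c₂₃)
  have := hQ.reverse.mem_or_mem_of_color_eq hcol h₂ h₃ h₂₃ c₂₃
  tauto

lemma eq_of_color_eq (hQ : IsTheta G Q) (hcol : RainbowTwoConnectedColouring G col)
    {b c g : Sym2 V} (hb : b ∈ G.edgeSet) (hc : c ∈ G.edgeSet) (hg : g ∈ G.edgeSet)
    (hxb : x ∉ b) (hyc : y ∉ c) (hbc : col b = col c) (hgc : col g = col c) (hgb : g ≠ b)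
    (hgc' : g ≠ c) : g = s(x, y) := by
  have hyg := (hQ.mem_or_mem_of_color_eq hcol hg hc hgc' hgc).resolve_right hyc
  have hxg := (hQ.reverse.mem_or_mem_of_color_eq hcol hg hb hgb
    (hgc.trans hbc.symm)).resolve_right hxb
  exact (Sym2.mem_and_mem_iff hQ.ne).1 ⟨hxg, hyg⟩

/-- A rainbow path from the far end of `c` to `y` through `x` consists of `c` and a whole branch,
which avoids `xy` and `b` and therefore carries both `g` and `h`. -/
lemma color_ne (hQ : IsTheta G Q) (hcol : RainbowTwoConnectedColouring G col)
    (hxy : s(x, y) ∈ G.edgeSet) {b c g h : Sym2 V} (hb : b ∈ G.edgeSet) (hc : c ∈ G.edgeSet)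
    (hg : g ∈ G.edgeSet) (hh : h ∈ G.edgeSet) (hyb : y ∈ b) (hxb : x ∉ b) (hxc : x ∈ c)
    (hyc : y ∉ c) (hbc : col b = col c) (hxyc : col s(x, y) = col c) (hxg : x ∈ g)
    (hyg : y ∉ g) (hyh : y ∈ h) (hxh : x ∉ h) (hgc : g ≠ c) (hhb : h ≠ b) :
    col g ≠ col h := by
  obtain ⟨i, hi⟩ := (hQ.mem_edgeSet c).1 hc
  have hci : c = s(x, (Q i).snd) := (hQ.isPath i).eq_of_start_mem hi
    (mk_start_snd_mem_edges (not_nil_of_ne hQ.ne)) hxc (by simp)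
  have hzy : (Q i).snd ≠ y := fun h' => hyc (by simp [hci, h'])
  obtain ⟨r, hr, hrain, hxr⟩ :=
    hcol.exists_isRainbowWalk_mem_support hQ.reverse.exists_mem_edges_of_isCycle hzy
  obtain ⟨hcr, t, hti, hQr⟩ := hQ.mem_edges_of_mem_support_snd i hr hxr
  rw [← hci] at hcr
  have hnot : ∀ e, col e = col c → e ≠ c → e ∉ (Q t).edges := fun e hec hne het =>
    hne (hrain.eq_of_color_eq (hQr e het) hcr hec)
  have hcQ : c ∉ (Q t).edges := fun h' => hQ.edges_disjoint i t hti.symm hi h'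
  have hxyQ : s(x, y) ∉ (Q t).edges := hnot _ hxyc (by rintro rfl; simp at hyc)
  have hbQ : b ∉ (Q t).edges := hnot _ hbc (by rintro rfl; exact hxb hxc)
  have hgQ : g ∈ (Q t).edges := hQ.mem_edges_of_start_mem hc hxy hg
    (by rintro rfl; simp at hyc) hgc.symm (by rintro rfl; simp at hyg) hxc (by simp) hxg hcQ hxyQ
  have hhQ : h ∈ (Q t).edges := hQ.mem_edges_of_end_mem hb hxy hh
    (by rintro rfl; simp at hxb) hhb.symm (by rintro rfl; simp at hxh) hyb (by simp) hyh hbQ hxyQ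
  intro hgh
  exact hxh (hrain.eq_of_color_eq (hQr g hgQ) (hQr h hhQ) hgh ▸ hxg)

/-- Only `n - 3` colours remain for the `n - 2` edges outside `{xy, b, c}`. -/
lemma false_of_mem_of_color_eq [Fintype V] {n : ℕ} (hQ : IsTheta G Q)
    (hcard : Fintype.card V = n) (hverts : ∀ w, ∃ i, w ∈ (Q i).support)
    {col : Sym2 V → Fin (n - 2)} (hcol : RainbowTwoConnectedColouring G col)
    (hxy : s(x, y) ∈ G.edgeSet) {b c : Sym2 V} (hb : b ∈ G.edgeSet) (hc : c ∈ G.edgeSet)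
    (hyb : y ∈ b) (hxb : x ∉ b) (hxc : x ∈ c) (hyc : y ∉ c) (hbc : col b = col c)
    (hxyc : col s(x, y) = col c) : False := by
  have hxyb : s(x, y) ≠ b := by rintro rfl; simp at hxb
  have hxyc' : s(x, y) ≠ c := by rintro rfl; simp at hyc
  have hbc' : b ≠ c := by rintro rfl; exact hxb hxc
  set S := G.edgeSet \ {s(x, y), b, c}
  have hS : S.ncard = n - 2 := by
    rw [Set.ncard_sdiff (by simp [Set.insert_subset_iff, hxy, hb, hc]), hQ.ncard_edgeSet hverts,
      hcard, Set.ncard_insert_of_notMem (by simp [hxyb, hxyc']), Set.ncard_pair hbc']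
    omega
  have hmaps : ∀ g ∈ S, col g ∈ ({col c}ᶜ : Set (Fin (n - 2))) := by
    rintro g ⟨hg, hgS⟩ (hgc : col g = col c)
    simp only [Set.mem_insert_iff, Set.mem_singleton_iff, not_or] at hgS
    exact hgS.1 (hQ.eq_of_color_eq hcol hb hc hg hxb hyc hbc hgc hgS.2.1 hgS.2.2)
  have hlt : ({col c}ᶜ : Set (Fin (n - 2))).ncard < S.ncard := by
    rw [Set.ncard_compl, Set.ncard_singleton, Nat.card_eq_fintype_card, Fintype.card_fin, hS]
    have := (col c).isLt
    omega
  obtain ⟨g, ⟨hg, hgS⟩, h, ⟨hh, hhS⟩, hgh, hcgh⟩ :=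
    Set.exists_ne_map_eq_of_ncard_lt_of_maps_to hlt hmaps
  simp only [Set.mem_insert_iff, Set.mem_singleton_iff, not_or] at hgS hhS
  have hgxy : ¬(x ∈ g ∧ y ∈ g) := fun h' => hgS.1 ((Sym2.mem_and_mem_iff hQ.ne).1 h')
  have hhxy : ¬(x ∈ h ∧ y ∈ h) := fun h' => hhS.1 ((Sym2.mem_and_mem_iff hQ.ne).1 h')
  have hy := hQ.mem_or_mem_of_color_eq hcol hg hh hgh hcgh
  rcases hQ.reverse.mem_or_mem_of_color_eq hcol hg hh hgh hcgh with hxg | hxh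
  · have hyh := hy.resolve_left fun hyg => hgxy ⟨hxg, hyg⟩
    exact hQ.color_ne hcol hxy hb hc hg hh hyb hxb hxc hyc hbc hxyc hxg
      (fun hyg => hgxy ⟨hxg, hyg⟩) hyh (fun hxh => hhxy ⟨hxh, hyh⟩) hgS.2.2 hhS.2.1 hcgh
  · have hyg := hy.resolve_right fun hyh => hhxy ⟨hxh, hyh⟩
    exact hQ.color_ne hcol hxy hb hc hh hg hyb hxb hxc hyc hbc hxyc hxh
      (fun hyh => hhxy ⟨hxh, hyh⟩) hyg (fun hxg => hgxy ⟨hxg, hyg⟩) hhS.2.2 hgS.2.1 hcgh.symm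

lemma false_of_color_eq [Fintype V] {n : ℕ} (hQ : IsTheta G Q) (hcard : Fintype.card V = n)
    (hverts : ∀ w, ∃ i, w ∈ (Q i).support) {col : Sym2 V → Fin (n - 2)}
    (hcol : RainbowTwoConnectedColouring G col) {b c : Sym2 V} (hxy : s(x, y) ∈ G.edgeSet)
    (hb : b ∈ G.edgeSet) (hc : c ∈ G.edgeSet) (hxyb : s(x, y) ≠ b) (hxyc : s(x, y) ≠ c)
    (hbc : b ≠ c) (cbc : col b = col c) (cxyc : col s(x, y) = col c) : False := by
  have hb2 : ¬(x ∈ b ∧ y ∈ b) := fun h => hxyb ((Sym2.mem_and_mem_iff hQ.ne).1 h).symm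
  have hc2 : ¬(x ∈ c ∧ y ∈ c) := fun h => hxyc ((Sym2.mem_and_mem_iff hQ.ne).1 h).symm
  have hx := hQ.reverse.mem_or_mem_of_color_eq hcol hb hc hbc cbc
  rcases hQ.mem_or_mem_of_color_eq hcol hb hc hbc cbc with hyb | hyc
  · have hxc := hx.resolve_left fun hxb => hb2 ⟨hxb, hyb⟩
    exact hQ.false_of_mem_of_color_eq hcard hverts hcol hxy hb hc hyb (fun hxb => hb2 ⟨hxb, hyb⟩)
      hxc (fun hyc => hc2 ⟨hxc, hyc⟩) cbc cxyc
  · have hxb := hx.resolve_right fun hxc => hc2 ⟨hxc, hyc⟩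
    exact hQ.false_of_mem_of_color_eq hcard hverts hcol hxy hc hb hyc (fun hxc => hc2 ⟨hxc, hyc⟩)
      hxb (fun hyb => hb2 ⟨hxb, hyb⟩) cbc.symm (cxyc.trans cbc.symm)

end IsTheta

theorem stmt16_general (n : ℕ) {V : Type*} [Fintype V] (hcard : Fintype.card V = n)
    (G : SimpleGraph V) (x y : V) (hxy : x ≠ y)
    (Q : Fin 3 → G.Walk x y)
    (hpath : ∀ i, (Q i).IsPath)
    (hdisj : ∀ i j, i ≠ j → ∀ w, w ∈ (Q i).support → w ∈ (Q j).support → w = x ∨ w = y)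
    (hedges : ∀ e, e ∈ G.edgeSet ↔ ∃ i, e ∈ (Q i).edges)
    (hverts : ∀ w : V, ∃ i, w ∈ (Q i).support)
    (hQ0 : 2 ≤ (Q 0).length) (hQ1 : 2 ≤ (Q 1).length)
    (col : Sym2 V → Fin (n - 2)) (hcol : RainbowTwoConnectedColouring G col) :
    ∀ e₁ e₂ e₃ : Sym2 V, e₁ ∈ G.edgeSet → e₂ ∈ G.edgeSet → e₃ ∈ G.edgeSet →
      e₁ ≠ e₂ → e₁ ≠ e₃ → e₂ ≠ e₃ → ¬ (col e₁ = col e₂ ∧ col e₂ = col e₃) := by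
  rintro e₁ e₂ e₃ h₁ h₂ h₃ h₁₂ h₁₃ h₂₃ ⟨c₁₂, c₂₃⟩
  have hQ := IsTheta.of_two_le_length hxy hpath hdisj hedges hQ0 hQ1
  rcases hQ.eq_or_eq_or_eq_of_color_eq hcol h₁ h₂ h₃ h₁₂ h₁₃ h₂₃ c₁₂ c₂₃ with rfl | rfl | rfl
  · exact hQ.false_of_color_eq hcard hverts hcol h₁ h₂ h₃ h₁₂ h₁₃ h₂₃ c₂₃ (c₁₂.trans c₂₃)
  · exact hQ.false_of_color_eq hcard hverts hcol h₂ h₁ h₃ h₁₂.symm h₂₃ h₁₃ (c₁₂.trans c₂₃) c₂₃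
  · exact hQ.false_of_color_eq hcard hverts hcol h₃ h₁ h₂ h₁₃.symm h₂₃.symm h₁₂ c₁₂ c₂₃.symm

/-- Let G be a Θ-graph on n ≥ 6 vertices, consisting of three
internally vertex-disjoint paths Q 0, Q 1, Q 2 from x to y, where Q 0 and Q 1
have at least 3 vertices (length ≥ 2). Under any rainbow 2-connected colouring
of G with at most n − 2 colours, no colour appears on three distinct edges. -/
theorem stmt16 (n : ℕ) (hn : 6 ≤ n) {V : Type*} [Fintype V] (hcard : Fintype.card V = n)
    (G : SimpleGraph V) (x y : V) (hxy : x ≠ y)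
    (Q : Fin 3 → G.Walk x y)
    (hpath : ∀ i, (Q i).IsPath)
    (hdisj : ∀ i j, i ≠ j → ∀ w, w ∈ (Q i).support → w ∈ (Q j).support → w = x ∨ w = y)
    (hedges : ∀ e, e ∈ G.edgeSet ↔ ∃ i, e ∈ (Q i).edges)
    (hverts : ∀ w : V, ∃ i, w ∈ (Q i).support)
    (hQ0 : 2 ≤ (Q 0).length) (hQ1 : 2 ≤ (Q 1).length)
    (col : Sym2 V → Fin (n - 2)) (hcol : RainbowTwoConnectedColouring G col) :
    ∀ e₁ e₂ e₃ : Sym2 V, e₁ ∈ G.edgeSet → e₂ ∈ G.edgeSet → e₃ ∈ G.edgeSet →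
      e₁ ≠ e₂ → e₁ ≠ e₃ → e₂ ≠ e₃ → ¬ (col e₁ = col e₂ ∧ col e₂ = col e₃) :=
  stmt16_general n hcard G x y hxy Q hpath hdisj hedges hverts hQ0 hQ1 col hcol
end

section
/- Let G be a Θ-graph consisting of three internally vertex-disjoint paths Q₁, Q₂, Q₃ joining vertices x and y, and fix a rainbow 2-connected edge-colouring of G. Suppose ab is an edge of Q_i and cd is an edge of Q_j with i ≠ j, where Q_i and Q_j each have at least 3 vertices, and where along each path directed from x to y the vertex a precedes b and the vertex c precedes d. If ab and cd receive the same colour, then either (a = x and d = y) or (b = y and c = x). -/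
open SimpleGraph

/-!
In a Θ-graph every edge at an inner vertex of one of the paths lies on that path. Hence a walk
that starts on the segment `b … y` of `Q i` and ends off it, without passing through `y`, must use
the edge `ab`. If `b ≠ y` and `d ≠ y`, one of the two internally disjoint rainbow `b`–`d` paths
avoids `y`; it leaves the segment `b … y` of `Q i`, and read backwards the segment `d … y` of `Q j`,
so it contains both `ab` and `cd`. These are distinct edges of the same colour, a contradiction.
So `b = y` or `d = y`, and reversing all paths, `a = x` or `c = x`. Finally `a = x, b = y` would
make `Q i` a single edge, and likewise for `Q j`.
-/

namespace SimpleGraph.Walk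

variable {V : Type*} {G : SimpleGraph V}

def IsBranch {x y : V} (p : G.Walk x y) : Prop :=
  ∀ ⦃u z : V⦄, G.Adj u z → u ∈ p.support → u ≠ x → u ≠ y → s(u, z) ∈ p.edges

theorem IsBranch.reverse {x y : V} {p : G.Walk x y} (hp : p.IsBranch) : p.reverse.IsBranch := by
  intro u z huz hu huy hux
  rw [support_reverse, List.mem_reverse] at hu
  rw [edges_reverse, List.mem_reverse]
  exact hp huz hu hux huy

theorem reverse_append_cons {x y a b : V} (w₁ : G.Walk x a) (hab : G.Adj a b) (w₂ : G.Walk b y) :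
    (w₁.append (cons hab w₂)).reverse = w₂.reverse.append (cons hab.symm w₁.reverse) := by
  rw [reverse_append, reverse_cons, ← append_assoc, cons_append, nil_append]

variable {x y a b : V} {hab : G.Adj a b} {w₁ : G.Walk x a} {w₂ : G.Walk b y}

theorem IsPath.disjoint_support_of_append_cons (hP : (w₁.append (cons hab w₂)).IsPath) :
    w₁.support.Disjoint w₂.support := by
  have hnodup := hP.support_nodup
  rw [support_append, support_cons, List.tail_cons] at hnodup
  exact List.disjoint_of_nodup_append hnodup

theorem IsPath.length_append_cons_eq_one {w₁ : G.Walk a a} {w₂ : G.Walk b b}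
    (hP : (w₁.append (cons hab w₂)).IsPath) : (w₁.append (cons hab w₂)).length = 1 := by
  obtain rfl : w₁ = Walk.nil := (isPath_iff_nil.mp hP.of_append_left).eq_nil
  obtain rfl : w₂ = Walk.nil := (isPath_iff_nil.mp hP.of_append_right.of_cons).eq_nil
  rfl

theorem IsBranch.mem_edges_of_leaves {u v : V} (hP : (w₁.append (cons hab w₂)).IsPath)
    (hbr : (w₁.append (cons hab w₂)).IsBranch) (R : G.Walk u v)
    (hu : u ∈ w₂.support) (hv : v ∉ w₂.support) (hy : y ∉ R.support) : s(a, b) ∈ R.edges := by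
  obtain ⟨e, he, hfst, hsnd⟩ : ∃ e ∈ R.darts, e.fst ∈ w₂.support ∧ e.snd ∉ w₂.support :=
    R.exists_boundary_dart {w | w ∈ w₂.support} hu hv
  have hdisj := hP.disjoint_support_of_append_cons
  have hfst₁ : e.fst ∉ w₁.support := fun h => hdisj h hfst
  have hmem := hbr e.adj (by simp [hfst]) (fun h => hfst₁ (h ▸ w₁.start_mem_support))
    (fun h => hy (h ▸ R.dart_fst_mem_support_of_mem_darts he))
  rw [edges_append, edges_cons, List.mem_append, List.mem_cons] at hmem
  rcases hmem with h₁ | hedge | h₂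
  · exact absurd (w₁.fst_mem_support_of_mem_edges h₁) hfst₁
  · exact hedge ▸ List.mem_map_of_mem he
  · exact absurd (w₂.snd_mem_support_of_mem_edges h₂) hsnd

end SimpleGraph.Walk

open SimpleGraph.Walk

theorem isBranch_of_theta {V ι : Type*} {G : SimpleGraph V} {x y : V} (Q : ι → G.Walk x y)
    (hdisj : ∀ i j, i ≠ j → ∀ w, w ∈ (Q i).support → w ∈ (Q j).support → w = x ∨ w = y)
    (hcover : ∀ e ∈ G.edgeSet, ∃ i, e ∈ (Q i).edges) (k : ι) : (Q k).IsBranch := by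
  intro u z huz hu hux huy
  obtain ⟨l, hl⟩ := hcover s(u, z) huz
  obtain rfl : l = k := by
    by_contra hlk
    have := hdisj k l (Ne.symm hlk) u hu ((Q l).fst_mem_support_of_mem_edges hl)
    tauto
  exact hl

theorem RainbowTwoConnectedColouring.exists_rainbow_walk_not_mem_support {V α : Type*}
    {G : SimpleGraph V} {col : Sym2 V → α} (hcol : RainbowTwoConnectedColouring G col)
    {u v w : V} (huv : u ≠ v) (hwu : w ≠ u) (hwv : w ≠ v) :
    ∃ R : G.Walk u v, IsRainbowWalk col R ∧ w ∉ R.support := by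
  obtain ⟨R₁, R₂, -, -, -, hR₁, hR₂, hint⟩ := hcol u v huv
  by_cases hw : w ∈ R₁.support
  · exact ⟨R₂, hR₂, fun hw₂ => by have := hint w hw hw₂; tauto⟩
  · exact ⟨R₁, hR₁, hw⟩

section

variable {V α : Type*} {G : SimpleGraph V} {col : Sym2 V → α} {x y a b c d : V}
  {hab : G.Adj a b} {hcd : G.Adj c d}
  {w₁ : G.Walk x a} {w₂ : G.Walk b y} {w₃ : G.Walk x c} {w₄ : G.Walk d y}

theorem RainbowTwoConnectedColouring.col_ne_of_ne_end (hcol : RainbowTwoConnectedColouring G col)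
    (hP : (w₁.append (cons hab w₂)).IsPath) (hP' : (w₃.append (cons hcd w₄)).IsPath)
    (hbr : (w₁.append (cons hab w₂)).IsBranch) (hbr' : (w₃.append (cons hcd w₄)).IsBranch)
    (hdisj : ∀ w, w ∈ (w₁.append (cons hab w₂)).support →
      w ∈ (w₃.append (cons hcd w₄)).support → w = x ∨ w = y)
    (hby : b ≠ y) (hdy : d ≠ y) : col s(a, b) ≠ col s(c, d) := by
  have hbx : b ≠ x := fun h =>
    hP.disjoint_support_of_append_cons (h ▸ w₁.start_mem_support) w₂.start_mem_support
  have hdx : d ≠ x := fun h =>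
    hP'.disjoint_support_of_append_cons (h ▸ w₃.start_mem_support) w₄.start_mem_support
  have hd : d ∉ (w₁.append (cons hab w₂)).support := fun h => by
    have := hdisj d h (by simp); tauto
  have hb : b ∉ (w₃.append (cons hcd w₄)).support := fun h => by
    have := hdisj b (by simp) h; tauto
  obtain ⟨R, hR, hyR⟩ := hcol.exists_rainbow_walk_not_mem_support
    (by rintro rfl; exact hd (by simp)) hby.symm hdy.symm
  have hab_mem : s(a, b) ∈ R.edges :=
    hbr.mem_edges_of_leaves hP R w₂.start_mem_support (fun h => hd (by simp [h])) hyR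
  have hcd_mem : s(c, d) ∈ R.edges := by
    rw [← List.mem_reverse, ← edges_reverse]
    exact hbr'.mem_edges_of_leaves hP' R.reverse w₄.start_mem_support
      (fun h => hb (by simp [h])) (by simpa using hyR)
  intro hsame
  have hd_mem : d ∈ s(a, b) :=
    List.inj_on_of_nodup_map hR hab_mem hcd_mem hsame ▸ Sym2.mem_mk_right c d
  rcases Sym2.mem_iff.mp hd_mem with rfl | rfl <;> exact hd (by simp)

theorem RainbowTwoConnectedColouring.col_ne_of_ne_start (hcol : RainbowTwoConnectedColouring G col)
    (hP : (w₁.append (cons hab w₂)).IsPath) (hP' : (w₃.append (cons hcd w₄)).IsPath)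
    (hbr : (w₁.append (cons hab w₂)).IsBranch) (hbr' : (w₃.append (cons hcd w₄)).IsBranch)
    (hdisj : ∀ w, w ∈ (w₁.append (cons hab w₂)).support →
      w ∈ (w₃.append (cons hcd w₄)).support → w = x ∨ w = y)
    (hax : a ≠ x) (hcx : c ≠ x) : col s(a, b) ≠ col s(c, d) := by
  have hne := hcol.col_ne_of_ne_end (hab := hab.symm) (hcd := hcd.symm) (w₁ := w₂.reverse)
    (w₂ := w₁.reverse) (w₃ := w₄.reverse) (w₄ := w₃.reverse)
    (reverse_append_cons w₁ hab w₂ ▸ hP.reverse) (reverse_append_cons w₃ hcd w₄ ▸ hP'.reverse)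
    (reverse_append_cons w₁ hab w₂ ▸ hbr.reverse) (reverse_append_cons w₃ hcd w₄ ▸ hbr'.reverse)
    (fun w hw hw' => by
      rw [← reverse_append_cons w₁ hab w₂, support_reverse, List.mem_reverse] at hw
      rw [← reverse_append_cons w₃ hcd w₄, support_reverse, List.mem_reverse] at hw'
      exact (hdisj w hw hw').symm) hax hcx
  rwa [Sym2.eq_swap, Sym2.eq_swap (a := c)]

end

theorem stmt17_general {V : Type*} (G : SimpleGraph V) (x y : V)
    (Q : Fin 3 → G.Walk x y)
    (hpath : ∀ i, (Q i).IsPath)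
    (hdisj : ∀ i j, i ≠ j → ∀ w, w ∈ (Q i).support → w ∈ (Q j).support → w = x ∨ w = y)
    (hedges : ∀ e, e ∈ G.edgeSet ↔ ∃ i, e ∈ (Q i).edges)
    {α : Type*} (col : Sym2 V → α) (hcol : RainbowTwoConnectedColouring G col)
    (i j : Fin 3) (hij : i ≠ j) (hQi : 2 ≤ (Q i).length) (hQj : 2 ≤ (Q j).length)
    (a b c d : V) (hab : G.Adj a b) (hcd : G.Adj c d)
    (w₁ : G.Walk x a) (w₂ : G.Walk b y)
    (hQieq : Q i = w₁.append (SimpleGraph.Walk.cons hab w₂))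
    (w₃ : G.Walk x c) (w₄ : G.Walk d y)
    (hQjeq : Q j = w₃.append (SimpleGraph.Walk.cons hcd w₄))
    (hsame : col s(a, b) = col s(c, d)) :
    (a = x ∧ d = y) ∨ (b = y ∧ c = x) := by
  have hbr := isBranch_of_theta Q hdisj fun e he => (hedges e).mp he
  have hPi := hpath i
  have hPj := hpath j
  have hbri := hbr i
  have hbrj := hbr j
  have hdij := hdisj i j hij
  rw [hQieq] at hPi hbri hdij hQi
  rw [hQjeq] at hPj hbrj hdij hQj
  have hend : b = y ∨ d = y := by
    by_contra! h
    exact hcol.col_ne_of_ne_end hPi hPj hbri hbrj hdij h.1 h.2 hsame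
  have hstart : a = x ∨ c = x := by
    by_contra! h
    exact hcol.col_ne_of_ne_start hPi hPj hbri hbrj hdij h.1 h.2 hsame
  have hi : ¬(a = x ∧ b = y) := by
    rintro ⟨rfl, rfl⟩
    have := hPi.length_append_cons_eq_one
    omega
  have hj : ¬(c = x ∧ d = y) := by
    rintro ⟨rfl, rfl⟩
    have := hPj.length_append_cons_eq_one
    omega
  tauto

/-- Let G be a Θ-graph with three internally vertex-disjoint
paths Q 0, Q 1, Q 2 from x to y, with a rainbow 2-connected colouring. If ab is
an edge of Q i and cd an edge of Q j (i ≠ j, both paths with at least 3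
vertices, a before b and c before d along the paths from x to y) and ab, cd
have the same colour, then a = x and d = y, or b = y and c = x. -/
theorem stmt17 {V : Type*} (G : SimpleGraph V) (x y : V) (hxy : x ≠ y)
    (Q : Fin 3 → G.Walk x y)
    (hpath : ∀ i, (Q i).IsPath)
    (hdisj : ∀ i j, i ≠ j → ∀ w, w ∈ (Q i).support → w ∈ (Q j).support → w = x ∨ w = y)
    (hedges : ∀ e, e ∈ G.edgeSet ↔ ∃ i, e ∈ (Q i).edges)
    (hverts : ∀ w : V, ∃ i, w ∈ (Q i).support)
    {α : Type*} (col : Sym2 V → α) (hcol : RainbowTwoConnectedColouring G col)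
    (i j : Fin 3) (hij : i ≠ j) (hQi : 2 ≤ (Q i).length) (hQj : 2 ≤ (Q j).length)
    (a b c d : V) (hab : G.Adj a b) (hcd : G.Adj c d)
    (w₁ : G.Walk x a) (w₂ : G.Walk b y)
    (hQieq : Q i = w₁.append (SimpleGraph.Walk.cons hab w₂))
    (w₃ : G.Walk x c) (w₄ : G.Walk d y)
    (hQjeq : Q j = w₃.append (SimpleGraph.Walk.cons hcd w₄))
    (hsame : col s(a, b) = col s(c, d)) :
    (a = x ∧ d = y) ∨ (b = y ∧ c = x) :=
  stmt17_general G x y Q hpath hdisj hedges col hcol i j hij hQi hQj a b c d hab hcd w₁ w₂ hQieq w₃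
    w₄ hQjeq hsame
end
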